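/- arXiv:2310.16701 — 9 statements merged into one kernel-verified Lean document; each statement's English description precedes it below -/
import Mathlib

section
/- For every even n ≥ 2, the family C_n of all (n−1)-element subsets of {1,…,n} is a minimal odd-sunflower, and for every odd n ≥ 3, the family C_n^+ consisting of all (n−1)-element subsets of {1,…,n} together with {1,…,n} is a minimal odd-sunflower; that is, in each case the family is an odd-sunflower and no proper subfamily with at least two members is an odd-sunflower. -/
variable {α : Type*}

/-- A family of at least two nonempty finite sets is an *odd-sunflower* if every element of
the union of its members is contained in an odd number of its members. -/
def IsOddSunflower [DecidableEq α] (F : Finset (Finset α)) : Prop :=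
  2 ≤ F.card ∧ (∀ S ∈ F, S.Nonempty) ∧
    ∀ x ∈ F.sup id, Odd (F.filter (fun S => x ∈ S)).card

/-- A family is *odd-sunflower-free* if no subfamily of it (necessarily with at least two
members) is an odd-sunflower. -/
def OddSunflowerFree [DecidableEq α] (F : Finset (Finset α)) : Prop :=
  ∀ H ⊆ F, ¬ IsOddSunflower H

/-- A nonempty family of nonempty finite sets is an *even-sunflower* if every element of
the union of its members is contained in an even number of its members. -/
def IsEvenSunflower [DecidableEq α] (F : Finset (Finset α)) : Prop :=
  F.Nonempty ∧ (∀ S ∈ F, S.Nonempty) ∧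
    ∀ x ∈ F.sup id, Even (F.filter (fun S => x ∈ S)).card

/-- A family is *even-sunflower-free* if no nonempty subfamily of it is an even-sunflower. -/
def EvenSunflowerFree [DecidableEq α] (F : Finset (Finset α)) : Prop :=
  ∀ H ⊆ F, ¬ IsEvenSunflower H

/-- A family of at least three sets is a *sunflower* if every element is contained either
in all of the sets or in at most one of them. -/
def IsSunflower [DecidableEq α] (H : Finset (Finset α)) : Prop :=
  3 ≤ H.card ∧ ∀ x : α, (∀ S ∈ H, x ∈ S) ∨ (H.filter (fun S => x ∈ S)).card ≤ 1

/-- A family of sets is an *antichain* if none of its members is a proper subset of another. -/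
def IsAntichainFamily (F : Finset (Finset α)) : Prop :=
  ∀ S ∈ F, ∀ T ∈ F, S ⊆ T → S = T

/-- An odd-sunflower is *minimal* if no proper subfamily of it is an odd-sunflower. -/
def IsMinimalOddSunflower [DecidableEq α] (F : Finset (Finset α)) : Prop :=
  IsOddSunflower F ∧ ∀ H ⊂ F, ¬ IsOddSunflower H

/-- `Cfam n` is the family of all `(n-1)`-element subsets of `{1, …, n}`. -/
def Cfam (n : ℕ) : Finset (Finset ℕ) := (Finset.Icc 1 n).powersetCard (n - 1)

/-- `CfamPlus n` is `Cfam n` together with the full set `{1, …, n}`. -/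
def CfamPlus (n : ℕ) : Finset (Finset ℕ) := insert (Finset.Icc 1 n) (Cfam n)

/-- A multifamily (multiset) of at least two nonempty finite sets is an *odd-sunflower* if
every element of the union of its members has odd degree (counted with multiplicity). -/
def MultiOddSunflower [DecidableEq α] (H : Multiset (Finset α)) : Prop :=
  2 ≤ Multiset.card H ∧ (∀ S ∈ H, S.Nonempty) ∧
    ∀ x ∈ H.sup, Odd (H.countP (fun S => x ∈ S))

/-- The wreath product of two families. -/
def Wreath {β : Type*} [DecidableEq α] [DecidableEq β]
    (F : Set (Finset α)) (G : Set (Finset β)) : Set (Finset (α × β)) :=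
  {S | ∃ F₀ ∈ F, ∃ g : α → Finset β, (∀ i ∈ F₀, g i ∈ G) ∧
    S = F₀.biUnion (fun i => ({i} : Finset α) ×ˢ g i)}

/-- Odd-sunflower-freeness for set-indexed families. -/
def OddSunflowerFreeS [DecidableEq α] (F : Set (Finset α)) : Prop :=
  ∀ H : Finset (Finset α), ↑H ⊆ F → ¬ IsOddSunflower H

/-- Antichain condition for set-indexed families. -/
def IsAntichainFamilyS (F : Set (Finset α)) : Prop :=
  ∀ S ∈ F, ∀ T ∈ F, S ⊆ T → S = T


namespace CfamAux

lemma cardA (n : ℕ) : (Finset.Icc 1 n).card = n := by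
  simp [Nat.card_Icc]

lemma mem_Cfam {n : ℕ} {S : Finset ℕ} :
    S ∈ Cfam n ↔ S ⊆ Finset.Icc 1 n ∧ S.card = n - 1 := by
  simp [Cfam, Finset.mem_powersetCard]

lemma erase_mem_Cfam {n : ℕ} {x : ℕ} (hx : x ∈ Finset.Icc 1 n) :
    (Finset.Icc 1 n).erase x ∈ Cfam n := by
  rw [mem_Cfam]
  exact ⟨Finset.erase_subset _ _, by rw [Finset.card_erase_of_mem hx, cardA]⟩

lemma A_notMem_Cfam {n : ℕ} (hn : 1 ≤ n) : Finset.Icc 1 n ∉ Cfam n := by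
  rw [mem_Cfam]
  rintro ⟨-, h⟩
  rw [cardA] at h
  omega

lemma eq_erase {n : ℕ} {S : Finset ℕ} {x : ℕ}
    (hS : S ∈ Cfam n) (hx : x ∈ Finset.Icc 1 n) (hxS : x ∉ S) :
    S = (Finset.Icc 1 n).erase x := by
  obtain ⟨hsub, hcard⟩ := mem_Cfam.mp hS
  refine Finset.eq_of_subset_of_card_le (Finset.subset_erase.mpr ⟨hsub, hxS⟩) ?_
  rw [Finset.card_erase_of_mem hx, cardA, hcard]

lemma card_Cfam {n : ℕ} (hn : 1 ≤ n) : (Cfam n).card = n := by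
  rw [Cfam, Finset.card_powersetCard, cardA, Nat.choose_symm hn, Nat.choose_one_right]

lemma card_CfamPlus {n : ℕ} (hn : 1 ≤ n) : (CfamPlus n).card = n + 1 := by
  rw [CfamPlus, Finset.card_insert_of_notMem (A_notMem_Cfam hn), card_Cfam hn]

lemma mem_sub {n : ℕ} {S : Finset ℕ} (hS : S ∈ CfamPlus n) : S ⊆ Finset.Icc 1 n := by
  rcases Finset.mem_insert.mp hS with rfl | h
  · exact Finset.Subset.refl _
  · exact (mem_Cfam.mp h).1

lemma filter_card {n : ℕ} {H : Finset (Finset ℕ)}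
    (hH : H ⊆ CfamPlus n) {x : ℕ} (hx : x ∈ Finset.Icc 1 n) :
    (H.filter (fun S => x ∈ S)).card
      = H.card - (if (Finset.Icc 1 n).erase x ∈ H then 1 else 0) := by
  have hneg : H.filter (fun S => ¬ x ∈ S)
      = if (Finset.Icc 1 n).erase x ∈ H then {(Finset.Icc 1 n).erase x} else ∅ := by
    ext S
    split_ifs with h
    · simp only [Finset.mem_filter, Finset.mem_singleton]
      constructor
      · rintro ⟨hSH, hxS⟩
        rcases Finset.mem_insert.mp (hH hSH) with rfl | hSC
        · exact absurd hx hxS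
        · exact eq_erase hSC hx hxS
      · rintro rfl
        exact ⟨h, Finset.notMem_erase _ _⟩
    · simp only [Finset.mem_filter, Finset.notMem_empty, iff_false, not_and]
      intro hSH hxS
      rcases Finset.mem_insert.mp (hH hSH) with rfl | hSC
      · exact hxS hx
      · exact h (eq_erase hSC hx hxS ▸ hSH)
  have hsum := Finset.card_filter_add_card_filter_not
    (s := H) (p := fun S => x ∈ S)
  rw [hneg] at hsum
  split_ifs at hsum ⊢ with h <;> simp at hsum <;> omega

/-- Master lemma: any odd-sunflower subfamily of `CfamPlus n` must be `Cfam n` with `n` even,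
or all of `CfamPlus n` with `n` odd. -/
lemma master {n : ℕ} (hn : 2 ≤ n) {H : Finset (Finset ℕ)} (hH : H ⊆ CfamPlus n)
    (hodd : IsOddSunflower H) :
    (H = Cfam n ∧ Even n) ∨ (H = CfamPlus n ∧ Odd n) := by
  obtain ⟨h2, -, hdeg⟩ := hodd
  have hn1 : 1 ≤ n := by omega
  -- every x in A is in the sup of H
  have hsup : ∀ x ∈ Finset.Icc 1 n, x ∈ H.sup id := by
    intro x hx
    obtain ⟨S, hS, T, hT, hST⟩ := Finset.one_lt_card.mp h2
    by_cases hxS : x ∈ S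
    · exact Finset.mem_sup.mpr ⟨S, hS, hxS⟩
    by_cases hxT : x ∈ T
    · exact Finset.mem_sup.mpr ⟨T, hT, hxT⟩
    · exfalso
      have hSA : S ≠ Finset.Icc 1 n := by rintro rfl; exact hxS hx
      have hTA : T ≠ Finset.Icc 1 n := by rintro rfl; exact hxT hx
      have hSC : S ∈ Cfam n := (Finset.mem_insert.mp (hH hS)).resolve_left hSA
      have hTC : T ∈ Cfam n := (Finset.mem_insert.mp (hH hT)).resolve_left hTA
      exact hST ((eq_erase hSC hx hxS).trans (eq_erase hTC hx hxT).symm)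
  have hdeg' : ∀ x ∈ Finset.Icc 1 n,
      Odd (H.card - (if (Finset.Icc 1 n).erase x ∈ H then 1 else 0)) := by
    intro x hx
    have := hdeg x (hsup x hx)
    rwa [filter_card hH hx] at this
  -- the indicator is constant
  have hconst : ∀ x ∈ Finset.Icc 1 n, (Finset.Icc 1 n).erase x ∈ H := by
    by_contra hcon
    push_neg at hcon
    obtain ⟨x, hx, hxout⟩ := hcon
    -- at x, degree is H.card, so H.card is odd
    have hodd1 : Odd H.card := by
      have := hdeg' x hx
      rwa [if_neg hxout, Nat.sub_zero] at this
    -- some member of H differs from A.erase x for every choice... find y with erase y ∈ H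
    -- H has ≥ 2 members; at most one is A itself, so some member is in Cfam
    obtain ⟨S, hS, T, hT, hST⟩ := Finset.one_lt_card.mp h2
    have hCf : ∃ U ∈ H, U ∈ Cfam n := by
      by_cases hSA : S = Finset.Icc 1 n
      · refine ⟨T, hT, ?_⟩
        refine (Finset.mem_insert.mp (hH hT)).resolve_left ?_
        rintro rfl; exact hST (hSA.trans rfl)
      · exact ⟨S, hS, (Finset.mem_insert.mp (hH hS)).resolve_left hSA⟩
    obtain ⟨U, hUH, hUC⟩ := hCf
    -- U = A.erase y for some y
    have hUss : U ⊂ Finset.Icc 1 n := by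
      refine (mem_Cfam.mp hUC).1.ssubset_of_ne ?_
      rintro rfl
      exact A_notMem_Cfam hn1 hUC
    obtain ⟨y, hy, hyU⟩ := Finset.exists_of_ssubset hUss
    have hUy : U = (Finset.Icc 1 n).erase y := eq_erase hUC hy hyU
    have hyin : (Finset.Icc 1 n).erase y ∈ H := hUy ▸ hUH
    have hodd2 : Odd (H.card - 1) := by
      have := hdeg' y hy
      rwa [if_pos hyin] at this
    obtain ⟨a, ha⟩ := hodd1
    obtain ⟨b, hb⟩ := hodd2
    omega
  -- so Cfam n ⊆ H
  have hCsub : Cfam n ⊆ H := by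
    intro S hS
    have hUss : S ⊂ Finset.Icc 1 n := by
      refine (mem_Cfam.mp hS).1.ssubset_of_ne ?_
      rintro rfl
      exact A_notMem_Cfam hn1 hS
    obtain ⟨y, hy, hyS⟩ := Finset.exists_of_ssubset hUss
    rw [eq_erase hS hy hyS]
    exact hconst y hy
  have hx1 : (1 : ℕ) ∈ Finset.Icc 1 n := by simp; omega
  by_cases hA : Finset.Icc 1 n ∈ H
  · -- H = CfamPlus n
    have hHeq : H = CfamPlus n := by
      refine Finset.Subset.antisymm hH ?_
      intro S hS
      rcases Finset.mem_insert.mp hS with rfl | h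
      · exact hA
      · exact hCsub h
    right
    refine ⟨hHeq, ?_⟩
    have := hdeg' 1 hx1
    rw [if_pos (hconst 1 hx1), hHeq, card_CfamPlus hn1] at this
    simpa using this
  · -- H = Cfam n
    have hHeq : H = Cfam n := by
      refine Finset.Subset.antisymm ?_ hCsub
      intro S hS
      exact (Finset.mem_insert.mp (hH hS)).resolve_left (by rintro rfl; exact hA hS)
    left
    refine ⟨hHeq, ?_⟩
    have := hdeg' 1 hx1
    rw [if_pos (hconst 1 hx1), hHeq, card_Cfam hn1] at this
    obtain ⟨a, ha⟩ := this
    refine ⟨a + 1, by omega⟩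

lemma Cfam_oddSunflower {n : ℕ} (hn : 2 ≤ n) (hev : Even n) :
    IsOddSunflower (Cfam n) := by
  have hn1 : 1 ≤ n := by omega
  refine ⟨by rw [card_Cfam hn1]; exact hn, ?_, ?_⟩
  · intro S hS
    rw [← Finset.card_pos, (mem_Cfam.mp hS).2]
    omega
  · intro x hx
    obtain ⟨S, hS, hxS⟩ := Finset.mem_sup.mp hx
    have hxA : x ∈ Finset.Icc 1 n := (mem_Cfam.mp hS).1 hxS
    rw [filter_card (Finset.subset_insert _ _) hxA, if_pos (erase_mem_Cfam hxA),
      card_Cfam hn1]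
    obtain ⟨k, hk⟩ := hev
    exact ⟨k - 1, by omega⟩

lemma CfamPlus_oddSunflower {n : ℕ} (hn : 3 ≤ n) (hod : Odd n) :
    IsOddSunflower (CfamPlus n) := by
  have hn1 : 1 ≤ n := by omega
  refine ⟨by rw [card_CfamPlus hn1]; omega, ?_, ?_⟩
  · intro S hS
    rcases Finset.mem_insert.mp hS with rfl | h
    · exact ⟨1, by simp; omega⟩
    · rw [← Finset.card_pos, (mem_Cfam.mp h).2]
      omega
  · intro x hx
    obtain ⟨S, hS, hxS⟩ := Finset.mem_sup.mp hx
    have hxA : x ∈ Finset.Icc 1 n := mem_sub hS hxS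
    have herase : (Finset.Icc 1 n).erase x ∈ CfamPlus n :=
      Finset.mem_insert_of_mem (erase_mem_Cfam hxA)
    rw [filter_card (Finset.Subset.refl _) hxA, if_pos herase, card_CfamPlus hn1]
    simpa using hod

end CfamAux


/-- For every even `n ≥ 2`, `C_n` is a minimal odd-sunflower, and for every odd `n ≥ 3`,
`C_n⁺` is a minimal odd-sunflower. -/
theorem Cfam_CfamPlus_minimalOddSunflower (n : ℕ) :
    (2 ≤ n → Even n → IsMinimalOddSunflower (Cfam n)) ∧
    (3 ≤ n → Odd n → IsMinimalOddSunflower (CfamPlus n)) := by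
  constructor
  · intro hn hev
    refine ⟨CfamAux.Cfam_oddSunflower hn hev, ?_⟩
    intro H hHss hodd
    have hH : H ⊆ CfamPlus n := hHss.1.trans (Finset.subset_insert _ _)
    rcases CfamAux.master hn hH hodd with ⟨hHeq, -⟩ | ⟨hHeq, hod⟩
    · exact hHss.2 (hHeq ▸ Finset.Subset.refl _)
    · have : Finset.Icc 1 n ∈ H := hHeq ▸ Finset.mem_insert_self _ _
      have hA : Finset.Icc 1 n ∈ Cfam n := hHss.1 this
      exact CfamAux.A_notMem_Cfam (by omega) hA
  · intro hn hod
    refine ⟨CfamAux.CfamPlus_oddSunflower hn hod, ?_⟩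
    intro H hHss hodd
    rcases CfamAux.master (by omega) hHss.1 hodd with ⟨hHeq, hev⟩ | ⟨hHeq, -⟩
    · exact (Nat.not_even_iff_odd.mpr hod) hev
    · exact hHss.2 (hHeq ▸ Finset.Subset.refl _)
end

section
/- Let F be an odd-sunflower-free family of nonempty finite sets, and let H be a multiset of cardinality at least 2, each of whose elements is a member of F. Then H is an odd-sunflower as a multifamily if and only if there exists a set F ∈ F occurring in H with odd multiplicity such that every other set occurring in H is a subset of F and occurs in H with even multiplicity. In particular, if the cardinality of H is even, then H is not an odd-sunflower. -/
variable {α : Type*}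

/-! The degree of an element in a multifamily has the same parity as its degree in the family
of sets occurring with odd multiplicity. If a multifamily drawn from an odd-sunflower-free
family is an odd-sunflower, this family of odd-multiplicity sets is itself an odd-sunflower
unless it has a single member `F₀`; then every element of the union has degree one in it, so
lies in `F₀`. Counting all members in the same way shows that `H` then has odd size. -/

namespace Multiset

section OddSupport

variable {β : Type*} [DecidableEq β] {s : Multiset β}

def oddSupport (s : Multiset β) : Finset β :=
  {a ∈ s.toFinset | Odd (s.count a)}

@[simp]
lemma mem_oddSupport {a : β} : a ∈ s.oddSupport ↔ Odd (s.count a) := by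
  simp only [oddSupport, Finset.mem_filter, mem_toFinset, and_iff_right_iff_imp]
  exact fun h => count_pos.mp h.pos

lemma mem_of_mem_oddSupport {a : β} (ha : a ∈ s.oddSupport) : a ∈ s :=
  count_pos.mp (mem_oddSupport.mp ha).pos

lemma oddSupport_eq_singleton_iff {a : β} :
    s.oddSupport = {a} ↔ Odd (s.count a) ∧ ∀ b ∈ s, b ≠ a → Even (s.count b) := by
  simp only [Finset.eq_singleton_iff_unique_mem, mem_oddSupport]
  refine and_congr_right fun _ => ⟨fun h b _ hba => ?_, fun h b hb => ?_⟩
  · exact Nat.not_odd_iff_even.mp fun hb => hba (h b hb)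
  · by_contra hba
    exact Nat.not_even_iff_odd.mpr hb (h b (count_pos.mp hb.pos) hba)

lemma odd_countP_iff (p : β → Prop) [DecidablePred p] :
    Odd (s.countP p) ↔ Odd (s.oddSupport.filter p).card := by
  rw [countP_eq_card_filter, ← toFinset_sum_count_eq, Finset.odd_sum_iff_odd_card_odd]
  congr! 2
  ext a
  by_cases ha : p a <;> simp [oddSupport, count_filter, ha, and_comm]

lemma odd_card_iff_odd_card_oddSupport : Odd (card s) ↔ Odd s.oddSupport.card := by
  simpa using s.odd_countP_iff fun _ => True

end OddSupport

lemma mem_sup_iff [DecidableEq α] {s : Multiset (Finset α)} {x : α} :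
    x ∈ s.sup ↔ ∃ t ∈ s, x ∈ t := by
  induction s using Multiset.induction with
  | empty => simp
  | cons a s ih => simp [ih]

end Multiset

open Multiset

namespace MultiOddSunflower

variable [DecidableEq α] {H : Multiset (Finset α)}

lemma odd_card_filter_oddSupport (h : MultiOddSunflower H) {x : α} (hx : x ∈ H.sup) :
    Odd (H.oddSupport.filter (x ∈ ·)).card :=
  (H.odd_countP_iff _).mp (h.2.2 x hx)

lemma oddSupport_nonempty (h : MultiOddSunflower H) : H.oddSupport.Nonempty := by
  obtain ⟨S, hS⟩ := card_pos_iff_exists_mem.mp (zero_lt_two.trans_le h.1)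
  obtain ⟨x, hx⟩ := h.2.1 S hS
  obtain ⟨T, hT⟩ :=
    Finset.card_pos.mp (h.odd_card_filter_oddSupport (mem_sup_iff.mpr ⟨S, hS, hx⟩)).pos
  exact ⟨T, (Finset.mem_filter.mp hT).1⟩

lemma isOddSunflower_oddSupport (h : MultiOddSunflower H) (hcard : 2 ≤ H.oddSupport.card) :
    IsOddSunflower H.oddSupport := by
  refine ⟨hcard, fun S hS => h.2.1 S (mem_of_mem_oddSupport hS), fun x hx => ?_⟩
  obtain ⟨S, hS, hxS⟩ := Finset.mem_sup.mp hx
  exact h.odd_card_filter_oddSupport (mem_sup_iff.mpr ⟨S, mem_of_mem_oddSupport hS, hxS⟩)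

lemma exists_oddSupport_eq_singleton {F : Finset (Finset α)} (hfree : OddSunflowerFree F)
    (hH : ∀ S ∈ H, S ∈ F) (h : MultiOddSunflower H) :
    ∃ F₀, H.oddSupport = {F₀} ∧ ∀ S ∈ H, S ⊆ F₀ := by
  have hle : H.oddSupport.card ≤ 1 := by
    by_contra! h2
    exact hfree _ (fun S hS => hH S (mem_of_mem_oddSupport hS)) (h.isOddSunflower_oddSupport h2)
  obtain ⟨F₀, hF₀⟩ := Finset.card_eq_one.mp (le_antisymm hle h.oddSupport_nonempty.card_pos)
  refine ⟨F₀, hF₀, fun S hS x hx => ?_⟩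
  have hodd := h.odd_card_filter_oddSupport (mem_sup_iff.mpr ⟨S, hS, hx⟩)
  rw [hF₀, Finset.filter_singleton] at hodd
  by_contra hxF₀
  simp [hxF₀] at hodd

end MultiOddSunflower

lemma multiOddSunflower_of_oddSupport_eq_singleton [DecidableEq α] {H : Multiset (Finset α)}
    (hcard : 2 ≤ card H) (hne : ∀ S ∈ H, S.Nonempty) {F₀ : Finset α}
    (hF₀ : H.oddSupport = {F₀}) (hsub : ∀ S ∈ H, S ⊆ F₀) : MultiOddSunflower H := by
  refine ⟨hcard, hne, fun x hx => ?_⟩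
  obtain ⟨S, hS, hxS⟩ := mem_sup_iff.mp hx
  rw [H.odd_countP_iff, hF₀, Finset.filter_singleton, if_pos (hsub S hS hxS)]
  exact odd_one

/-- Lemma 3 (multifamily version): a multiset `H` of at least two members of an
odd-sunflower-free family `F` of nonempty sets is an odd-sunflower iff it consists of an
odd number of copies of a single member `F₀ ∈ F` together with an even number of copies of
some subsets of `F₀`.  In particular, if `H` has even cardinality it is not an
odd-sunflower. -/
theorem multiOddSunflower_iff {α : Type*} [DecidableEq α]
    (F : Finset (Finset α)) (hne : ∀ S ∈ F, S.Nonempty) (hFfree : OddSunflowerFree F)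
    (H : Multiset (Finset α)) (hH : ∀ S ∈ H, S ∈ F) (hcard : 2 ≤ Multiset.card H) :
    (MultiOddSunflower H ↔
      ∃ F₀ ∈ F, Odd (H.count F₀) ∧
        ∀ S ∈ H, S ≠ F₀ → S ⊆ F₀ ∧ Even (H.count S)) ∧
    (Even (Multiset.card H) → ¬ MultiOddSunflower H) := by
  have forward (h : MultiOddSunflower H) : ∃ F₀, H.oddSupport = {F₀} ∧ ∀ S ∈ H, S ⊆ F₀ :=
    h.exists_oddSupport_eq_singleton hFfree hH
  refine ⟨⟨fun h => ?_, fun ⟨F₀, _, hodd, hrest⟩ => ?_⟩, fun heven h => ?_⟩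
  · obtain ⟨F₀, hF₀, hsub⟩ := forward h
    obtain ⟨hodd, heven⟩ := oddSupport_eq_singleton_iff.mp hF₀
    exact ⟨F₀, hH F₀ (count_pos.mp hodd.pos), hodd, fun S hS hSF₀ =>
      ⟨hsub S hS, heven S hS hSF₀⟩⟩
  · refine multiOddSunflower_of_oddSupport_eq_singleton hcard (fun S hS => hne S (hH S hS))
      (oddSupport_eq_singleton_iff.mpr ⟨hodd, fun S hS hSF₀ => (hrest S hS hSF₀).2⟩)
      fun S hS => ?_
    by_cases hSF₀ : S = F₀
    · exact hSF₀.le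
    · exact (hrest S hS hSF₀).1
  · obtain ⟨F₀, hF₀, -⟩ := forward h
    have hodd : Odd (card H) := by simp [odd_card_iff_odd_card_oddSupport, hF₀]
    exact Nat.not_even_iff_odd.mpr hodd heven
end

section
/- Let F be an odd-sunflower-free antichain of nonempty finite sets, and let H be a multiset of cardinality at least 2, each of whose elements is a member of F. Then H is an odd-sunflower as a multifamily if and only if H consists of an odd number of copies of a single member of F. -/
variable {α : Type*}

lemma countP_eq_sum_counts' [DecidableEq α] (H : Multiset α) (p : α → Prop) [DecidablePred p] :
    H.countP p = ∑ S ∈ H.toFinset, if p S then H.count S else 0 := by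
  rw [Multiset.countP_eq_card_filter, ← Multiset.toFinset_sum_count_eq]
  rw [← Finset.sum_subset (Multiset.toFinset_subset.2 (Multiset.subset_of_le (Multiset.filter_le p H)))]
  · exact Finset.sum_congr rfl fun a _ => Multiset.count_filter
  · intro x _ hx
    simp only [Multiset.mem_toFinset, Multiset.mem_filter, not_and] at hx
    split
    · rw [Multiset.count_eq_zero]
      intro hxH; exact hx hxH ‹_›
    · rfl

lemma odd_countP_iff' [DecidableEq α] (H : Multiset α) (p : α → Prop) [DecidablePred p] :
    Odd (H.countP p) ↔
      Odd ((H.toFinset.filter (fun S => Odd (H.count S) ∧ p S)).card) := by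
  have h : ∀ a ∈ H.toFinset, (if p a then H.count a else 0) % 2
      = (if Odd (H.count a) ∧ p a then 1 else 0) % 2 := by
    intro a _
    by_cases hp : p a
    · by_cases ho : Odd (H.count a)
      · simp [hp, ho, Nat.odd_iff.1 ho]
      · simp [hp, ho, Nat.even_iff.1 (Nat.not_odd_iff_even.1 ho)]
    · simp [hp]
  rw [Nat.odd_iff, Nat.odd_iff, countP_eq_sum_counts', Finset.card_eq_sum_ones,
    Finset.sum_filter, Finset.sum_nat_mod, Finset.sum_congr rfl h, ← Finset.sum_nat_mod]

lemma mem_msup' [DecidableEq α] {H : Multiset (Finset α)} {x : α} : x ∈ H.sup ↔ ∃ S ∈ H, x ∈ S := by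
  induction H using Multiset.induction with
  | empty => simp
  | cons a s ih => simp [Multiset.sup_cons, ih]


/-- Remark after Lemma 3: a multiset `H` of at least two members of an odd-sunflower-free
antichain `F` of nonempty sets is an odd-sunflower iff it consists of an odd number of
copies of a single member of `F`. -/
theorem multiOddSunflower_iff_of_antichain {α : Type*} [DecidableEq α]
    (F : Finset (Finset α)) (hne : ∀ S ∈ F, S.Nonempty)
    (hFfree : OddSunflowerFree F) (hac : IsAntichainFamily F)
    (H : Multiset (Finset α)) (hH : ∀ S ∈ H, S ∈ F) (hcard : 2 ≤ Multiset.card H) :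
    MultiOddSunflower H ↔
      ∃ F₀ ∈ F, ∃ k : ℕ, Odd k ∧ H = Multiset.replicate k F₀ := by
  unfold MultiOddSunflower
  unfold OddSunflowerFree IsOddSunflower at hFfree
  unfold IsAntichainFamily at hac
  constructor
  · rintro ⟨-, -, hodd⟩
    set D := H.toFinset.filter (fun S => Odd (H.count S)) with hD
    have hDF : D ⊆ F := fun a ha => hH a (Multiset.mem_toFinset.1 (Finset.mem_filter.1 ha).1)
    -- key parity translation
    have key : ∀ x, Odd (H.countP (fun S => x ∈ S)) ↔
        Odd ((D.filter (fun S => x ∈ S)).card) := by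
      intro x
      rw [odd_countP_iff', hD, Finset.filter_filter]
    -- x in D's union → x in H.sup
    have hDsup : ∀ x ∈ D.sup id, x ∈ H.sup := by
      intro x hx
      obtain ⟨S, hS, hxS⟩ := Finset.mem_sup.1 hx
      exact mem_msup'.2 ⟨S, Multiset.mem_toFinset.1 (Finset.mem_filter.1 hS).1, hxS⟩
    have hDcard : D.card ≤ 1 := by
      by_contra hc
      push_neg at hc
      exact hFfree D hDF ⟨hc, fun S hS => hne S (hDF hS),
        fun x hx => (key x).1 (hodd x (hDsup x hx))⟩
    have hDne : D.Nonempty := by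
      obtain ⟨S, hS⟩ := (Multiset.card_pos_iff_exists_mem (s := H)).1 (by omega)
      obtain ⟨x, hx⟩ := hne S (hH S hS)
      have := (key x).1 (hodd x (mem_msup'.2 ⟨S, hS, hx⟩))
      have : (D.filter (fun S => x ∈ S)).Nonempty :=
        Finset.card_pos.1 this.pos
      exact this.mono (Finset.filter_subset _ _)
    obtain ⟨F₀, hF₀D⟩ := Finset.card_eq_one.1 (le_antisymm hDcard hDne.card_pos)
    have hF₀mem : F₀ ∈ D := hF₀D ▸ Finset.mem_singleton_self F₀
    have hF₀F : F₀ ∈ F := hDF hF₀mem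
    -- every member of H equals F₀
    have hall : ∀ S ∈ H, S = F₀ := by
      intro S hS
      refine hac S (hH S hS) F₀ hF₀F (fun x hxS => ?_)
      have := (key x).1 (hodd x (mem_msup'.2 ⟨S, hS, hxS⟩))
      rw [hF₀D] at this
      by_contra hxF₀
      rw [Finset.filter_singleton, if_neg hxF₀] at this
      simp at this
    have hrep : H = Multiset.replicate (Multiset.card H) F₀ :=
      Multiset.eq_replicate_card.2 hall
    refine ⟨F₀, hF₀F, Multiset.card H, ?_, hrep⟩
    have hcnt : Odd (H.count F₀) := (Finset.mem_filter.1 hF₀mem).2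
    rwa [hrep, Multiset.count_replicate_self] at hcnt
  · rintro ⟨F₀, hF₀, k, hk, rfl⟩
    have hk2 : 2 ≤ k := by simpa using hcard
    refine ⟨by simpa using hcard, fun S hS => ?_, fun x hx => ?_⟩
    · rw [Multiset.eq_of_mem_replicate hS]; exact hne F₀ hF₀
    · obtain ⟨S, hS, hxS⟩ := mem_msup'.1 hx
      rw [Multiset.eq_of_mem_replicate hS] at hxS
      have : (Multiset.replicate k F₀).countP (fun S => x ∈ S) = k := by
        rw [Multiset.countP_eq_card_filter, Multiset.filter_eq_self.2
          (fun a ha => by rw [Multiset.eq_of_mem_replicate ha]; exact hxS),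
          Multiset.card_replicate]
      rw [this]; exact hk
end

section
/- Let F and G be odd-sunflower-free families of nonempty subsets of two disjoint ground sets, and suppose at least one of F and G is an antichain. Then the direct sum F + G = {F ∪ G : F ∈ F, G ∈ G} is odd-sunflower-free. Moreover, if both F and G are antichains, then F + G is an antichain. -/
variable {α : Type*}

/-! Let `H ⊆ F + G` be an odd-sunflower, with `F` an antichain on `A`. Modulo 2, the degree in
`H` of a point of `A` is its degree in the family of those traces `S ∩ A`, `S ∈ H`, that arise
from an odd number of members of `H`. If there are at least two such odd traces, they form an
odd-sunflower in `F`. Otherwise there is exactly one, `F₀`; it contains every trace, so by the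
antichain property every `S ∈ H` meets `A` in `F₀`, and `S ↦ S ∩ B` maps `H` injectively onto
an odd-sunflower in `G`. -/

section DirectSum

open Finset

variable [DecidableEq α]

theorem odd_card_filter_comp_iff {β γ : Type*} [DecidableEq γ] (s : Finset β) (f : β → γ)
    (p : γ → Prop) [DecidablePred p] :
    Odd #{b ∈ s | p (f b)} ↔ Odd #{t ∈ s.image f | Odd #{b ∈ s | f b = t} ∧ p t} := by
  rw [card_eq_sum_card_fiberwise (f := f) (t := {t ∈ s.image f | p t})
    (fun b hb => mem_filter.2 ⟨mem_image_of_mem f (mem_filter.1 hb).1, (mem_filter.1 hb).2⟩),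
    odd_sum_iff_odd_card_odd, filter_filter]
  congr! 3 with t
  rw [filter_filter, and_comm]
  refine and_congr_left fun ht => ?_
  rw [filter_congr fun b _ => and_iff_right_of_imp fun h : f b = t => h ▸ ht]

def oddTraces (H : Finset (Finset α)) (A : Finset α) : Finset (Finset α) :=
  {T ∈ H.image (· ∩ A) | Odd #{S ∈ H | S ∩ A = T}}

theorem odd_card_oddTraces_iff (H : Finset (Finset α)) {A : Finset α} {x : α} (hx : x ∈ A) :
    Odd #{T ∈ oddTraces H A | x ∈ T} ↔ Odd #{S ∈ H | x ∈ S} := by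
  have hdeg : {S ∈ H | x ∈ S} = {S ∈ H | x ∈ S ∩ A} := by
    ext S; simp [hx]
  rw [hdeg, odd_card_filter_comp_iff H (· ∩ A) (x ∈ ·), oddTraces, filter_filter]

theorem sup_oddTraces_eq {H : Finset (Finset α)} (A : Finset α)
    (hH : ∀ x ∈ H.sup id, Odd #{S ∈ H | x ∈ S}) :
    (oddTraces H A).sup id = H.sup id ∩ A := by
  ext x
  simp only [mem_inter]
  constructor
  · intro hx
    obtain ⟨T, hT, hxT⟩ := mem_sup.1 hx
    obtain ⟨S, hS, rfl⟩ := mem_image.1 (filter_subset _ _ hT)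
    exact ⟨mem_sup.2 ⟨S, hS, (mem_inter.1 hxT).1⟩, (mem_inter.1 hxT).2⟩
  · rintro ⟨hxH, hxA⟩
    have hodd := (odd_card_oddTraces_iff H hxA).2 (hH x hxH)
    obtain ⟨T, hT⟩ := card_pos.1 hodd.pos
    exact mem_sup.2 ⟨T, (mem_filter.1 hT).1, (mem_filter.1 hT).2⟩

theorem odd_card_oddTraces {H : Finset (Finset α)} (A : Finset α)
    (hH : ∀ x ∈ H.sup id, Odd #{S ∈ H | x ∈ S}) :
    ∀ x ∈ (oddTraces H A).sup id, Odd #{T ∈ oddTraces H A | x ∈ T} := by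
  intro x hx
  rw [sup_oddTraces_eq A hH, mem_inter] at hx
  exact (odd_card_oddTraces_iff H hx.2).2 (hH x hx.1)

theorem IsOddSunflower.image_inter {H : Finset (Finset α)} {B : Finset α}
    (hH : IsOddSunflower H) (hinj : Set.InjOn (· ∩ B) H) (hne : ∀ S ∈ H, (S ∩ B).Nonempty) :
    IsOddSunflower (H.image (· ∩ B)) := by
  obtain ⟨hcard, -, hodd⟩ := hH
  refine ⟨(card_image_of_injOn hinj).symm ▸ hcard, forall_mem_image.2 hne, fun x hx => ?_⟩
  obtain ⟨T, hT, hxT⟩ := mem_sup.1 hx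
  obtain ⟨S, hS, rfl⟩ := mem_image.1 hT
  have hxB : x ∈ B := (mem_inter.1 hxT).2
  have hdeg : {S ∈ H | x ∈ S} = {S ∈ H | x ∈ S ∩ B} := by
    ext S; simp [hxB]
  rw [filter_image, card_image_of_injOn (hinj.mono (filter_subset _ _)), ← hdeg]
  exact hodd x (mem_sup.2 ⟨S, hS, (mem_inter.1 hxT).1⟩)

/-- The direct sum `F + G`. -/
def familySum (F G : Finset (Finset α)) : Finset (Finset α) :=
  (F ×ˢ G).image fun p => p.1 ∪ p.2

theorem familySum_comm (F G : Finset (Finset α)) : familySum F G = familySum G F := by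
  rw [familySum, familySum, ← image_swap_product, image_image]
  exact image_congr fun p _ => union_comm _ _

theorem union_inter_eq_of_subset_of_disjoint {s t A : Finset α} (hs : s ⊆ A)
    (ht : Disjoint t A) : (s ∪ t) ∩ A = s := by
  rw [union_inter_distrib_right, inter_eq_left.2 hs, disjoint_iff_inter_eq_empty.1 ht, union_empty]

section Decomposition

variable {A B : Finset α} {F G : Finset (Finset α)}

theorem inter_mem_of_mem_familySum (hAB : Disjoint A B) (hF : ∀ S ∈ F, S ⊆ A)
    (hG : ∀ S ∈ G, S ⊆ B) {S : Finset α} (hS : S ∈ familySum F G) :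
    S ∩ A ∈ F ∧ S ∩ B ∈ G ∧ S ∩ A ∪ S ∩ B = S := by
  obtain ⟨⟨F₀, G₀⟩, h, rfl⟩ := mem_image.1 hS
  obtain ⟨hF₀, hG₀⟩ := mem_product.1 h
  have hA : (F₀ ∪ G₀) ∩ A = F₀ :=
    union_inter_eq_of_subset_of_disjoint (hF _ hF₀) (hAB.symm.mono_left (hG _ hG₀))
  have hB : (F₀ ∪ G₀) ∩ B = G₀ := by
    rw [union_comm]
    exact union_inter_eq_of_subset_of_disjoint (hG _ hG₀) (hAB.mono_left (hF _ hF₀))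
  rw [hA, hB]
  exact ⟨hF₀, hG₀, rfl⟩

theorem IsAntichainFamily.familySum (hAB : Disjoint A B) (hF : ∀ S ∈ F, S ⊆ A)
    (hG : ∀ S ∈ G, S ⊆ B) (hFa : IsAntichainFamily F) (hGa : IsAntichainFamily G) :
    IsAntichainFamily (familySum F G) := by
  intro S hS T hT hST
  obtain ⟨hSA, hSB, hS⟩ := inter_mem_of_mem_familySum hAB hF hG hS
  obtain ⟨hTA, hTB, hT⟩ := inter_mem_of_mem_familySum hAB hF hG hT
  rw [← hS, ← hT, hFa _ hSA _ hTA (inter_subset_inter hST Subset.rfl),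
    hGa _ hSB _ hTB (inter_subset_inter hST Subset.rfl)]

theorem OddSunflowerFree.familySum_of_isAntichainFamily_left (hAB : Disjoint A B)
    (hF : ∀ S ∈ F, S.Nonempty ∧ S ⊆ A) (hG : ∀ S ∈ G, S.Nonempty ∧ S ⊆ B)
    (hFfree : OddSunflowerFree F) (hGfree : OddSunflowerFree G) (hFa : IsAntichainFamily F) :
    OddSunflowerFree (familySum F G) := by
  rintro H hHsub hH
  have hdec : ∀ S ∈ H, S ∩ A ∈ F ∧ S ∩ B ∈ G ∧ S ∩ A ∪ S ∩ B = S := fun S hS =>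
    inter_mem_of_mem_familySum hAB (fun S hS => (hF S hS).2) (fun S hS => (hG S hS).2) (hHsub hS)
  set P := oddTraces H A
  have hPF : P ⊆ F := fun T hT => by
    obtain ⟨S, hS, rfl⟩ := mem_image.1 (filter_subset _ _ hT)
    exact (hdec S hS).1
  have htrace : ∀ S ∈ H, S ∩ A ⊆ P.sup id := fun S hS => by
    rw [sup_oddTraces_eq A hH.2.2]
    exact inter_subset_inter (le_sup (f := id) hS) Subset.rfl
  obtain ⟨S₀, hS₀⟩ : H.Nonempty := card_pos.1 (by have := hH.1; omega)
  have hPne : P.Nonempty := by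
    obtain ⟨x, hx⟩ := (hF _ (hdec S₀ hS₀).1).1
    obtain ⟨T, hT, -⟩ := mem_sup.1 (htrace S₀ hS₀ hx)
    exact ⟨T, hT⟩
  rcases le_or_gt 2 #P with h2 | h1
  · exact hFfree P hPF ⟨h2, fun T hT => (hF T (hPF hT)).1, odd_card_oddTraces A hH.2.2⟩
  -- The only odd trace contains every trace, hence equals each of them.
  obtain ⟨F₀, hP⟩ := card_eq_one.1 (show #P = 1 by have := hPne.card_pos; omega)
  have hconst : ∀ S ∈ H, S ∩ A = F₀ := fun S hS =>
    hFa _ (hdec S hS).1 _ (hPF (hP ▸ mem_singleton_self F₀)) (by simpa [hP] using htrace S hS)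
  have hinj : Set.InjOn (· ∩ B) H := fun S₁ h₁ S₂ h₂ he => by
    rw [← (hdec S₁ h₁).2.2, ← (hdec S₂ h₂).2.2, hconst S₁ h₁, hconst S₂ h₂]
    exact congrArg (F₀ ∪ ·) he
  exact hGfree _ (image_subset_iff.2 fun S hS => (hdec S hS).2.1)
    (hH.image_inter hinj fun S hS => (hG _ (hdec S hS).2.1).1)

end Decomposition

end DirectSum

/-- Lemma 4: if `F` and `G` are odd-sunflower-free families of nonempty subsets of two
disjoint ground sets, and at least one of them is an antichain, then the direct sum
`F + G = {F ∪ G : F ∈ F, G ∈ G}` is odd-sunflower-free.  Moreover, if both are antichains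
then so is `F + G`. -/
theorem directSum_oddSunflowerFree {α : Type*} [DecidableEq α]
    (A B : Finset α) (hAB : Disjoint A B) (F G : Finset (Finset α))
    (hF : ∀ S ∈ F, S.Nonempty ∧ S ⊆ A) (hG : ∀ S ∈ G, S.Nonempty ∧ S ⊆ B)
    (hFfree : OddSunflowerFree F) (hGfree : OddSunflowerFree G) :
    ((IsAntichainFamily F ∨ IsAntichainFamily G) →
      OddSunflowerFree ((F ×ˢ G).image fun p => p.1 ∪ p.2)) ∧
    (IsAntichainFamily F → IsAntichainFamily G →
      IsAntichainFamily ((F ×ˢ G).image fun p => p.1 ∪ p.2)) := by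
  have hFA : ∀ S ∈ F, S ⊆ A := fun S hS => (hF S hS).2
  have hGB : ∀ S ∈ G, S ⊆ B := fun S hS => (hG S hS).2
  refine ⟨?_, IsAntichainFamily.familySum hAB hFA hGB⟩
  rintro (hFa | hGa)
  · exact OddSunflowerFree.familySum_of_isAntichainFamily_left hAB hF hG hFfree hGfree hFa
  · change OddSunflowerFree (familySum F G)
    rw [familySum_comm]
    exact OddSunflowerFree.familySum_of_isAntichainFamily_left hAB.symm hG hF hGfree hFfree hGa
end

section
/- If there exists an odd-sunflower-free antichain of nonempty subsets of an n-element set with a members, and an odd-sunflower-free antichain of nonempty subsets of an m-element set with b members, then there exists an odd-sunflower-free antichain of nonempty subsets of an (n+m)-element set with a·b members. -/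
variable {α : Type*}

open Finset in
private lemma oddCastTwo (k : ℕ) : Odd k ↔ (k : ZMod 2) = 1 := by
  rw [Nat.odd_iff]
  constructor
  · intro h; rw [← ZMod.natCast_mod, h]; norm_num
  · intro h
    rcases Nat.mod_two_eq_zero_or_one k with h0 | h1
    · rw [← ZMod.natCast_mod, h0] at h; simp at h
    · exact h1

open Finset in
private lemma coordLemma {ι : Type} [DecidableEq ι] (F : Finset (Finset ℕ))
    (hFne : ∀ S ∈ F, S.Nonempty) (hFac : IsAntichainFamily F)
    (hFfree : OddSunflowerFree F)
    (K : Finset ι) (f : ι → Finset ℕ) (hf : ∀ p ∈ K, f p ∈ F) (hK : K.Nonempty)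
    (hdeg : ∀ p ∈ K, ∀ x ∈ f p, Odd ((K.filter (fun q => x ∈ f q)).card)) :
    ∃ S0, ∀ p ∈ K, f p = S0 := by
  classical
  set c : Finset ℕ → ℕ := fun S => (K.filter (fun q => f q = S)).card with hc
  set P : Finset (Finset ℕ) := F.filter (fun S => Odd (c S)) with hP
  have parity : ∀ x : ℕ, ((K.filter (fun q => x ∈ f q)).card : ZMod 2)
      = ((P.filter (fun S => x ∈ S)).card : ZMod 2) := by
    intro x
    have h1 : (K.filter (fun q => x ∈ f q)).card
        = ∑ S ∈ F, ((K.filter (fun q => x ∈ f q)).filter (fun q => f q = S)).card :=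
      Finset.card_eq_sum_card_fiberwise (fun q hq => hf q (Finset.mem_filter.mp hq).1)
    have h2 : ∀ S ∈ F, ((K.filter (fun q => x ∈ f q)).filter (fun q => f q = S)).card
        = if x ∈ S then c S else 0 := by
      intro S _
      split_ifs with hx
      · rw [hc]
        congr 1
        ext q
        simp only [Finset.mem_filter]
        constructor
        · rintro ⟨⟨hq, _⟩, h⟩; exact ⟨hq, h⟩
        · rintro ⟨hq, h⟩; exact ⟨⟨hq, by rw [h]; exact hx⟩, h⟩
      · rw [Finset.card_eq_zero]
        apply Finset.eq_empty_of_forall_notMem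
        intro q hq
        simp only [Finset.mem_filter] at hq
        exact hx (hq.2 ▸ hq.1.2)
    have h3 : (K.filter (fun q => x ∈ f q)).card = ∑ S ∈ F, (if x ∈ S then c S else 0) := by
      rw [h1]; exact Finset.sum_congr rfl h2
    rw [h3, Nat.cast_sum]
    have h4 : ∀ S ∈ F, ((if x ∈ S then c S else 0 : ℕ) : ZMod 2)
        = if Odd (c S) ∧ x ∈ S then 1 else 0 := by
      intro S _
      by_cases hx : x ∈ S
      · by_cases ho : Odd (c S)
        · simp [hx, ho, (oddCastTwo (c S)).mp ho]
        · rw [if_pos hx, if_neg (fun h => ho h.1)]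
          rw [Nat.not_odd_iff_even] at ho
          obtain ⟨j, hj⟩ := ho
          rw [hj]
          push_cast
          have h2z : (2 : ZMod 2) = 0 := rfl
          have hjj : ((j : ZMod 2)) + j = 2 * j := by ring
          rw [hjj, h2z, zero_mul]
      · simp [hx]
    rw [Finset.sum_congr rfl h4, Finset.sum_boole]
    congr 2
    rw [hP, Finset.filter_filter]
  have hPsub : P ⊆ F := Finset.filter_subset _ _
  have hcov : ∀ S ∈ P, ∀ x ∈ S, Odd ((P.filter (fun T => x ∈ T)).card) := by
    intro S hS x hx
    have hodd : Odd (c S) := (Finset.mem_filter.mp hS).2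
    have hpos : 0 < c S := hodd.pos
    obtain ⟨p, hp⟩ := Finset.card_pos.mp hpos
    rw [Finset.mem_filter] at hp
    have hd := hdeg p hp.1 x (by rw [hp.2]; exact hx)
    rw [oddCastTwo] at hd ⊢
    rw [← parity x]; exact hd
  have hP1 : P.card ≤ 1 := by
    by_contra h
    push_neg at h
    apply hFfree P hPsub
    refine ⟨h, fun S hS => hFne S (hPsub hS), ?_⟩
    intro x hx
    rw [Finset.mem_sup] at hx
    obtain ⟨S, hS, hxS⟩ := hx
    exact hcov S hS x hxS
  obtain ⟨p0, hp0⟩ := hK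
  obtain ⟨x0, hx0⟩ := hFne _ (hf p0 hp0)
  have hx0deg := hdeg p0 hp0 x0 hx0
  have hPne : (P.filter (fun S => x0 ∈ S)).Nonempty := by
    rw [← Finset.card_pos]
    have ho : Odd ((P.filter (fun S => x0 ∈ S)).card) := by
      rw [oddCastTwo, ← parity]; exact (oddCastTwo _).mp hx0deg
    exact ho.pos
  obtain ⟨S0, hS0⟩ := hPne
  have hS0P : S0 ∈ P := (Finset.mem_filter.mp hS0).1
  refine ⟨S0, fun p hp => ?_⟩
  have hsub : f p ⊆ S0 := by
    intro x hx
    have hd := hdeg p hp x hx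
    have ho : Odd ((P.filter (fun T => x ∈ T)).card) := by
      rw [oddCastTwo, ← parity]; exact (oddCastTwo _).mp hd
    obtain ⟨T, hT⟩ := Finset.card_pos.mp ho.pos
    rw [Finset.mem_filter] at hT
    have hTS : T = S0 := Finset.card_le_one.mp hP1 T hT.1 S0 hS0P
    exact hTS ▸ hT.2
  exact hFac _ (hf p hp) _ (hPsub hS0P) hsub

/-- Corollary of Lemma 4: from an odd-sunflower-free antichain of `a` nonempty subsets of
an `n`-element set and one of `b` nonempty subsets of an `m`-element set, one obtains an
odd-sunflower-free antichain of `a·b` nonempty subsets of an `(n+m)`-element set. -/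
theorem oddSunflowerFree_antichain_mul (n m a b : ℕ)
    (h₁ : ∃ F : Finset (Finset ℕ), (∀ S ∈ F, S.Nonempty ∧ S ⊆ Finset.Icc 1 n) ∧
      IsAntichainFamily F ∧ OddSunflowerFree F ∧ F.card = a)
    (h₂ : ∃ G : Finset (Finset ℕ), (∀ S ∈ G, S.Nonempty ∧ S ⊆ Finset.Icc 1 m) ∧
      IsAntichainFamily G ∧ OddSunflowerFree G ∧ G.card = b) :
    ∃ H : Finset (Finset ℕ), (∀ S ∈ H, S.Nonempty ∧ S ⊆ Finset.Icc 1 (n + m)) ∧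
      IsAntichainFamily H ∧ OddSunflowerFree H ∧ H.card = a * b := by
  classical
  obtain ⟨F, hF, hFac, hFfree, hFcard⟩ := h₁
  obtain ⟨G, hG, hGac, hGfree, hGcard⟩ := h₂
  set emb : ℕ ↪ ℕ := ⟨fun x => x + n, add_left_injective n⟩ with hemb
  set g : Finset ℕ × Finset ℕ → Finset ℕ := fun p => p.1 ∪ p.2.map emb with hg
  have hmem1 : ∀ p ∈ F ×ˢ G, ∀ x : ℕ, x ≤ n → (x ∈ g p ↔ x ∈ p.1) := by
    intro p hp x hxn
    rw [Finset.mem_product] at hp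
    simp only [hg, Finset.mem_union, Finset.mem_map, hemb, Function.Embedding.coeFn_mk]
    constructor
    · rintro (h | ⟨z, hz, hzx⟩)
      · exact h
      · have h1 : 1 ≤ z := (Finset.mem_Icc.mp ((hG _ hp.2).2 hz)).1
        omega
    · exact Or.inl
  have hmem2 : ∀ p ∈ F ×ˢ G, ∀ y : ℕ, 1 ≤ y → (y + n ∈ g p ↔ y ∈ p.2) := by
    intro p hp y hy1
    rw [Finset.mem_product] at hp
    simp only [hg, Finset.mem_union, Finset.mem_map, hemb, Function.Embedding.coeFn_mk]
    constructor
    · rintro (h | ⟨z, hz, hzx⟩)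
      · have h2 : y + n ≤ n := (Finset.mem_Icc.mp ((hF _ hp.1).2 h)).2
        omega
      · have : z = y := by omega
        exact this ▸ hz
    · intro h; exact Or.inr ⟨y, h, rfl⟩
  have hsplit : ∀ p ∈ F ×ˢ G, ∀ q ∈ F ×ˢ G, g p ⊆ g q → p.1 ⊆ q.1 ∧ p.2 ⊆ q.2 := by
    intro p hp q hq hsub
    have hp' := Finset.mem_product.mp hp
    constructor
    · intro x hx
      have hxn : x ≤ n := (Finset.mem_Icc.mp ((hF _ hp'.1).2 hx)).2
      exact (hmem1 q hq x hxn).mp (hsub ((hmem1 p hp x hxn).mpr hx))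
    · intro y hy
      have hy1 : 1 ≤ y := (Finset.mem_Icc.mp ((hG _ hp'.2).2 hy)).1
      exact (hmem2 q hq y hy1).mp (hsub ((hmem2 p hp y hy1).mpr hy))
  have hinj : Set.InjOn g ↑(F ×ˢ G) := by
    intro p hp q hq hpq
    have hp' := Finset.mem_coe.mp hp
    have hq' := Finset.mem_coe.mp hq
    have h1 := hsplit p hp' q hq' hpq.le
    have h2 := hsplit q hq' p hp' hpq.ge
    exact Prod.ext (Finset.Subset.antisymm h1.1 h2.1) (Finset.Subset.antisymm h1.2 h2.2)
  refine ⟨(F ×ˢ G).image g, ?_, ?_, ?_, ?_⟩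
  · intro U hU
    obtain ⟨p, hp, rfl⟩ := Finset.mem_image.mp hU
    have hp' := Finset.mem_product.mp hp
    constructor
    · obtain ⟨x, hx⟩ := (hF _ hp'.1).1
      exact ⟨x, Finset.mem_union_left _ hx⟩
    · intro x hx
      rw [hg] at hx
      rcases Finset.mem_union.mp hx with h | h
      · have := Finset.mem_Icc.mp ((hF _ hp'.1).2 h)
        rw [Finset.mem_Icc]; omega
      · obtain ⟨z, hz, rfl⟩ := Finset.mem_map.mp h
        have := Finset.mem_Icc.mp ((hG _ hp'.2).2 hz)
        simp only [hemb, Function.Embedding.coeFn_mk]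
        rw [Finset.mem_Icc]; omega
  · intro U hU V hV hUV
    obtain ⟨p, hp, rfl⟩ := Finset.mem_image.mp hU
    obtain ⟨q, hq, rfl⟩ := Finset.mem_image.mp hV
    have h1 := hsplit p hp q hq hUV
    have hpq : p = q := by
      have hp' := Finset.mem_product.mp hp
      have hq' := Finset.mem_product.mp hq
      exact Prod.ext (hFac _ hp'.1 _ hq'.1 h1.1) (hGac _ hp'.2 _ hq'.2 h1.2)
    rw [hpq]
  · -- OddSunflowerFree
    intro H' hH' hOS
    obtain ⟨h2card, hne, hdegH⟩ := hOS
    set K : Finset (Finset ℕ × Finset ℕ) := (F ×ˢ G).filter (fun p => g p ∈ H') with hK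
    have hKsub : K ⊆ F ×ˢ G := Finset.filter_subset _ _
    have hH'eq : H' = K.image g := by
      apply Finset.Subset.antisymm
      · intro U hU
        obtain ⟨p, hp, rfl⟩ := Finset.mem_image.mp (hH' hU)
        exact Finset.mem_image.mpr ⟨p, Finset.mem_filter.mpr ⟨hp, hU⟩, rfl⟩
      · intro U hU
        obtain ⟨p, hp, rfl⟩ := Finset.mem_image.mp hU
        exact (Finset.mem_filter.mp hp).2
    have hKinj : Set.InjOn g K := hinj.mono (by exact_mod_cast hKsub)
    have hcardK : K.card = H'.card := by
      rw [hH'eq, Finset.card_image_of_injOn hKinj]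
    have hKne : K.Nonempty := by
      rw [← Finset.card_pos, hcardK]; omega
    have hcount : ∀ (P : Finset ℕ × Finset ℕ → Prop) [DecidablePred P]
        (Q : Finset ℕ → Prop) [DecidablePred Q],
        (∀ p ∈ K, (Q (g p) ↔ P p)) →
        (H'.filter Q).card = (K.filter P).card := by
      intro P _ Q _ hPQ
      rw [hH'eq, Finset.filter_image,
        Finset.card_image_of_injOn (hKinj.mono (by exact_mod_cast Finset.filter_subset _ _)),
        Finset.filter_congr hPQ]
    have hdeg1 : ∀ p ∈ K, ∀ x ∈ p.1, Odd ((K.filter (fun q => x ∈ q.1)).card) := by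
      intro p hp x hx
      have hp' := Finset.mem_product.mp (hKsub hp)
      have hxn : x ≤ n := (Finset.mem_Icc.mp ((hF _ hp'.1).2 hx)).2
      have hxsup : x ∈ H'.sup id := by
        rw [Finset.mem_sup]
        exact ⟨g p, (Finset.mem_filter.mp hp).2,
          (hmem1 p (hKsub hp) x hxn).mpr hx⟩
      have := hdegH x hxsup
      rwa [hcount (fun q => x ∈ q.1) (fun U => x ∈ U)
        (fun q hq => hmem1 q (hKsub hq) x hxn)] at this
    have hdeg2 : ∀ p ∈ K, ∀ y ∈ p.2, Odd ((K.filter (fun q => y ∈ q.2)).card) := by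
      intro p hp y hy
      have hp' := Finset.mem_product.mp (hKsub hp)
      have hy1 : 1 ≤ y := (Finset.mem_Icc.mp ((hG _ hp'.2).2 hy)).1
      have hxsup : y + n ∈ H'.sup id := by
        rw [Finset.mem_sup]
        exact ⟨g p, (Finset.mem_filter.mp hp).2,
          (hmem2 p (hKsub hp) y hy1).mpr hy⟩
      have := hdegH (y + n) hxsup
      rwa [hcount (fun q => y ∈ q.2) (fun U => y + n ∈ U)
        (fun q hq => hmem2 q (hKsub hq) y hy1)] at this
    obtain ⟨S0, hS0⟩ := coordLemma F (fun S hS => (hF S hS).1) hFac hFfree K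
      Prod.fst (fun p hp => (Finset.mem_product.mp (hKsub hp)).1) hKne hdeg1
    obtain ⟨T0, hT0⟩ := coordLemma G (fun S hS => (hG S hS).1) hGac hGfree K
      Prod.snd (fun p hp => (Finset.mem_product.mp (hKsub hp)).2) hKne hdeg2
    have hK1 : K.card ≤ 1 := by
      rw [Finset.card_le_one]
      intro p hp q hq
      exact Prod.ext ((hS0 p hp).trans (hS0 q hq).symm)
        ((hT0 p hp).trans (hT0 q hq).symm)
    omega
  · rw [Finset.card_image_of_injOn hinj, Finset.card_product, hFcard, hGcard]
end

section
/- Let F be an odd-sunflower-free family of nonempty subsets of {1,…,n} and let G be an odd-sunflower-free antichain of nonempty subsets of {1,…,m}. Then the wreath product F ≀ G is odd-sunflower-free. Moreover, if F is also an antichain, then F ≀ G is an antichain. -/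
variable {α : Type*}

/-!
Let `H` be an odd-sunflower in `F ≀ G` and fix a first coordinate `i`. The fibers over `i` of
the members of `H` meeting `{i} × _` form a multifamily in `G` in which every point has odd
degree; keeping the sets of odd multiplicity gives an odd-sunflower in `G` unless it is a single
set, and since `G` is an antichain all these fibers then coincide. So a member of `H` is determined
by its projection to the first coordinate, and the projections form an odd-sunflower in `F`.
-/

open Finset

variable {β γ ι : Type*}

section OddValues

variable [DecidableEq γ]

def oddValues (s : Finset ι) (f : ι → γ) : Finset γ :=
  {c ∈ s.image f | Odd #{x ∈ s | f x = c}}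

theorem odd_card_filter_comp_iff_s10 (s : Finset ι) (f : ι → γ) (p : γ → Prop) [DecidablePred p] :
    Odd #{x ∈ s | p (f x)} ↔ Odd #{c ∈ oddValues s f | p c} := by
  have hsum : #{x ∈ s | p (f x)} = ∑ c ∈ {c ∈ s.image f | p c}, #{x ∈ s | f x = c} := by
    rw [card_eq_sum_card_fiberwise (f := f) (t := {c ∈ s.image f | p c})
      fun x hx => by
        simp only [mem_coe, mem_filter] at hx ⊢
        exact ⟨mem_image_of_mem f hx.1, hx.2⟩]
    refine sum_congr rfl fun c hc => ?_
    rw [filter_filter]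
    exact congrArg card (filter_congr fun x _ => by grind)
  rw [hsum, odd_sum_iff_odd_card_odd, oddValues, filter_filter, filter_filter]
  simp only [and_comm]

end OddValues

/-- The values taken an odd number of times form a subfamily of `G` in which every point still
has odd degree, so it is a single set, and by the antichain property every `f x` equals it. -/
theorem eq_of_forall_odd_card_filter_mem [DecidableEq β] {G : Finset (Finset β)}
    (hGne : ∀ T ∈ G, T.Nonempty) (hGfree : OddSunflowerFree G) (hGac : IsAntichainFamily G)
    {s : Finset ι} {f : ι → Finset β} (hf : ∀ x ∈ s, f x ∈ G)
    (hodd : ∀ x ∈ s, ∀ b ∈ f x, Odd #{y ∈ s | b ∈ f y}) {x y : ι} (hx : x ∈ s) (hy : y ∈ s) :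
    f x = f y := by
  set K := oddValues s f
  have hKG : K ⊆ G := fun T hT => by
    obtain ⟨z, hz, rfl⟩ := mem_image.1 (mem_filter.1 hT).1
    exact hf z hz
  have hKodd : ∀ z ∈ s, ∀ b ∈ f z, Odd #{T ∈ K | b ∈ T} := fun z hz b hb =>
    (odd_card_filter_comp_iff_s10 s f (b ∈ ·)).1 (hodd z hz b hb)
  have hKcard : #K ≤ 1 := by
    by_contra! hK
    refine hGfree K hKG ⟨hK, fun T hT => hGne T (hKG hT), fun b hb => ?_⟩
    obtain ⟨T, hT, hbT⟩ := mem_sup.1 hb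
    obtain ⟨z, hz, rfl⟩ := mem_image.1 (mem_filter.1 hT).1
    exact hKodd z hz b hbT
  have hmemK : ∀ z ∈ s, ∃ T ∈ K, f z = T := by
    intro z hz
    obtain ⟨b, hb⟩ := hGne _ (hf z hz)
    obtain ⟨T, hT⟩ := card_pos.1 (hKodd z hz b hb).pos
    refine ⟨T, (mem_filter.1 hT).1, hGac _ (hf z hz) _ (hKG (mem_filter.1 hT).1) fun c hc => ?_⟩
    obtain ⟨T', hT'⟩ := card_pos.1 (hKodd z hz c hc).pos
    rw [card_le_one.1 hKcard _ (mem_filter.1 hT).1 _ (mem_filter.1 hT').1]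
    exact (mem_filter.1 hT').2
  obtain ⟨T, hT, hxT⟩ := hmemK x hx
  obtain ⟨T', hT', hyT'⟩ := hmemK y hy
  rw [hxT, hyT', card_le_one.1 hKcard _ hT _ hT']

noncomputable def fiber (S : Finset (α × β)) (a : α) : Finset β :=
  S.preimage (Prod.mk a) (Prod.mk_right_injective a).injOn

@[simp]
theorem mem_fiber {S : Finset (α × β)} {a : α} {b : β} : b ∈ fiber S a ↔ (a, b) ∈ S :=
  mem_preimage

theorem eq_of_image_fst_eq_of_fiber_eq [DecidableEq α] {S T : Finset (α × β)}
    (hfst : S.image Prod.fst = T.image Prod.fst)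
    (hfib : ∀ a ∈ S.image Prod.fst, fiber S a = fiber T a) : S = T := by
  ext ⟨a, b⟩
  constructor
  · intro h
    rw [← mem_fiber, ← hfib a (mem_image_of_mem Prod.fst h), mem_fiber]
    exact h
  · intro h
    rw [← mem_fiber, hfib a (hfst ▸ mem_image_of_mem Prod.fst h), mem_fiber]
    exact h

section Wreath

variable [DecidableEq α] [DecidableEq β]

theorem image_fst_biUnion_singleton_product {A : Finset α} {g : α → Finset β}
    (hg : ∀ a ∈ A, (g a).Nonempty) : (A.biUnion fun a => {a} ×ˢ g a).image Prod.fst = A := by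
  ext a
  simp only [mem_image, mem_biUnion, mem_product, mem_singleton, Prod.exists]
  constructor
  · rintro ⟨_, _, ⟨a', ha', rfl, _⟩, rfl⟩
    exact ha'
  · intro ha
    obtain ⟨b, hb⟩ := hg a ha
    exact ⟨a, b, ⟨a, ha, rfl, hb⟩, rfl⟩

theorem fiber_biUnion_singleton_product {A : Finset α} {g : α → Finset β} {a : α} (ha : a ∈ A) :
    fiber (A.biUnion fun a => {a} ×ˢ g a) a = g a := by
  ext b
  simp only [mem_fiber, mem_biUnion, mem_product, mem_singleton]
  exact ⟨fun ⟨_, _, rfl, hb⟩ => hb, fun hb => ⟨a, ha, rfl, hb⟩⟩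

theorem image_fst_mem_and_fiber_mem_of_mem_wreath {F : Set (Finset α)} {G : Set (Finset β)}
    (hGne : ∀ T ∈ G, T.Nonempty) {S : Finset (α × β)} (hS : S ∈ Wreath F G) :
    S.image Prod.fst ∈ F ∧ ∀ a ∈ S.image Prod.fst, fiber S a ∈ G := by
  obtain ⟨A, hA, g, hg, rfl⟩ := hS
  rw [image_fst_biUnion_singleton_product fun a ha => hGne _ (hg a ha)]
  exact ⟨hA, fun a ha => (fiber_biUnion_singleton_product (g := g) ha).symm ▸ hg a ha⟩

theorem isAntichainFamilyS_wreath {F : Finset (Finset α)} {G : Finset (Finset β)}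
    (hGne : ∀ T ∈ G, T.Nonempty) (hFac : IsAntichainFamily F) (hGac : IsAntichainFamily G) :
    IsAntichainFamilyS (Wreath (F : Set (Finset α)) (G : Set (Finset β))) := by
  intro S hS T hT hST
  obtain ⟨hSF, hSG⟩ := image_fst_mem_and_fiber_mem_of_mem_wreath hGne hS
  obtain ⟨hTF, hTG⟩ := image_fst_mem_and_fiber_mem_of_mem_wreath hGne hT
  have hfst := hFac _ hSF _ hTF (image_subset_image hST)
  refine eq_of_image_fst_eq_of_fiber_eq hfst fun a ha =>
    hGac _ (hSG a ha) _ (hTG a (hfst ▸ ha)) fun b hb => ?_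
  rw [mem_fiber] at hb ⊢
  exact hST hb

end Wreath

section OddSunflower

variable [DecidableEq α] [DecidableEq β] {F : Finset (Finset α)} {G : Finset (Finset β)}
  {H : Finset (Finset (α × β))}

theorem fiber_eq_of_isOddSunflower (hGne : ∀ T ∈ G, T.Nonempty) (hGfree : OddSunflowerFree G)
    (hGac : IsAntichainFamily G) (hH : ↑H ⊆ Wreath (F : Set (Finset α)) (G : Set (Finset β)))
    (hHodd : IsOddSunflower H) {a : α} {S T : Finset (α × β)} (hS : S ∈ H) (hT : T ∈ H)
    (haS : a ∈ S.image Prod.fst) (haT : a ∈ T.image Prod.fst) : fiber S a = fiber T a := by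
  have hdeg : ∀ b,
      #{U ∈ {U ∈ H | a ∈ U.image Prod.fst} | b ∈ fiber U a} = #{U ∈ H | (a, b) ∈ U} := fun b => by
    rw [filter_filter]
    exact congrArg card (filter_congr fun U _ => by simp only [mem_fiber]; grind)
  refine eq_of_forall_odd_card_filter_mem hGne hGfree hGac (s := {U ∈ H | a ∈ U.image Prod.fst})
    (f := (fiber · a)) (fun U hU => ?_) (fun U hU b hb => ?_) (mem_filter.2 ⟨hS, haS⟩)
    (mem_filter.2 ⟨hT, haT⟩)
  · exact (image_fst_mem_and_fiber_mem_of_mem_wreath hGne (hH (mem_filter.1 hU).1)).2 a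
      (mem_filter.1 hU).2
  · rw [hdeg]
    exact hHodd.2.2 _ (mem_sup.2 ⟨U, (mem_filter.1 hU).1, mem_fiber.1 hb⟩)

theorem injOn_image_fst_of_isOddSunflower (hGne : ∀ T ∈ G, T.Nonempty)
    (hGfree : OddSunflowerFree G) (hGac : IsAntichainFamily G)
    (hH : ↑H ⊆ Wreath (F : Set (Finset α)) (G : Set (Finset β))) (hHodd : IsOddSunflower H) :
    Set.InjOn (image Prod.fst) (H : Set (Finset (α × β))) := fun _ hS _ hT hST =>
  eq_of_image_fst_eq_of_fiber_eq hST fun _ ha =>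
    fiber_eq_of_isOddSunflower hGne hGfree hGac hH hHodd hS hT ha (hST ▸ ha)

theorem isOddSunflower_image_image_fst (hGne : ∀ T ∈ G, T.Nonempty)
    (hGfree : OddSunflowerFree G) (hGac : IsAntichainFamily G)
    (hH : ↑H ⊆ Wreath (F : Set (Finset α)) (G : Set (Finset β))) (hHodd : IsOddSunflower H) :
    IsOddSunflower (H.image (image Prod.fst)) := by
  have hinj := injOn_image_fst_of_isOddSunflower hGne hGfree hGac hH hHodd
  refine ⟨?_, ?_, fun a ha => ?_⟩
  · rw [card_image_of_injOn hinj]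
    exact hHodd.1
  · simp only [mem_image, forall_exists_index, and_imp, forall_apply_eq_imp_iff₂]
    exact fun S hS => (hHodd.2.1 S hS).image Prod.fst
  · obtain ⟨_, hP, haP⟩ := mem_sup.1 ha
    obtain ⟨S, hS, rfl⟩ := mem_image.1 hP
    obtain ⟨b, hab⟩ : ∃ b, (a, b) ∈ S := by simpa using haP
    have hdeg : {T ∈ H | a ∈ T.image Prod.fst} = {T ∈ H | (a, b) ∈ T} := by
      refine filter_congr fun T hT => ⟨fun haT => ?_, fun habT => mem_image_of_mem Prod.fst habT⟩
      rw [← mem_fiber, fiber_eq_of_isOddSunflower hGne hGfree hGac hH hHodd hT hS haT haP,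
        mem_fiber]
      exact hab
    rw [filter_image, card_image_of_injOn (hinj.mono (filter_subset _ _)), hdeg]
    exact hHodd.2.2 _ (mem_sup.2 ⟨S, hS, hab⟩)

theorem oddSunflowerFreeS_wreath (hGne : ∀ T ∈ G, T.Nonempty) (hFfree : OddSunflowerFree F)
    (hGfree : OddSunflowerFree G) (hGac : IsAntichainFamily G) :
    OddSunflowerFreeS (Wreath (F : Set (Finset α)) (G : Set (Finset β))) := fun H hH hHodd =>
  hFfree _ (fun _ hP => by
      obtain ⟨S, hS, rfl⟩ := mem_image.1 hP
      exact (image_fst_mem_and_fiber_mem_of_mem_wreath hGne (hH hS)).1)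
    (isOddSunflower_image_image_fst hGne hGfree hGac hH hHodd)

end OddSunflower

theorem wreath_oddSunflowerFree_general (m : ℕ) (F G : Finset (Finset ℕ))
    (hG : ∀ S ∈ G, S.Nonempty ∧ S ⊆ Finset.Icc 1 m)
    (hFfree : OddSunflowerFree F) (hGfree : OddSunflowerFree G)
    (hGac : IsAntichainFamily G) :
    OddSunflowerFreeS (Wreath (F : Set (Finset ℕ)) (G : Set (Finset ℕ))) ∧
    (IsAntichainFamily F → IsAntichainFamilyS (Wreath (F : Set (Finset ℕ)) (G : Set (Finset ℕ)))) := by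
  have hGne : ∀ T ∈ G, T.Nonempty := fun T hT => (hG T hT).1
  exact ⟨oddSunflowerFreeS_wreath hGne hFfree hGfree hGac,
    fun hFac => isAntichainFamilyS_wreath hGne hFac hGac⟩

/-- Lemma 6: if `F` is an odd-sunflower-free family of nonempty subsets of `{1,…,n}` and
`G` is an odd-sunflower-free antichain of nonempty subsets of `{1,…,m}`, then the wreath
product `F ≀ G` is odd-sunflower-free; moreover, if `F` is also an antichain then so is
`F ≀ G`. -/
theorem wreath_oddSunflowerFree (n m : ℕ) (F G : Finset (Finset ℕ))
    (hF : ∀ S ∈ F, S.Nonempty ∧ S ⊆ Finset.Icc 1 n)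
    (hG : ∀ S ∈ G, S.Nonempty ∧ S ⊆ Finset.Icc 1 m)
    (hFfree : OddSunflowerFree F) (hGfree : OddSunflowerFree G)
    (hGac : IsAntichainFamily G) :
    OddSunflowerFreeS (Wreath (F : Set (Finset ℕ)) (G : Set (Finset ℕ))) ∧
    (IsAntichainFamily F → IsAntichainFamilyS (Wreath (F : Set (Finset ℕ)) (G : Set (Finset ℕ)))) :=
  wreath_oddSunflowerFree_general m F G hG hFfree hGfree hGac
end

section
/- Let k ≥ 1 and let X be a 3k-element set partitioned into k blocks of size 3. The family of all subsets of X that intersect each block in exactly two elements is an odd-sunflower-free antichain of size 3^k. In particular, for every k ≥ 1 there exists an odd-sunflower-free family of nonempty subsets of a 3k-element set with 3^k members. -/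
variable {α : Type*}

/-- The family of all subsets of `X` meeting each block of a given partition of `X` into
`k` blocks of size `3` in exactly two elements. -/
def blockFamily {α : Type*} [DecidableEq α] (k : ℕ) (X : Finset α)
    (B : Fin k → Finset α) : Finset (Finset α) :=
  X.powerset.filter (fun S => ∀ i, (S ∩ B i).card = 2)

/-!
Fix an odd sunflower `H` inside the family and a block `B i`. Every member of `H` meets `B i` in
two points, so the degrees of the three points of `B i` add up to the even number `2 |H|`. A point
of positive degree lies in the union of `H` and has odd degree, so some point `zᵢ` of `B i` lies
in no member of `H`. Hence every member of `H` meets `B i` in exactly `B i \ {zᵢ}`, for every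
`i`; so all members of `H` coincide, contradicting `|H| ≥ 2`. The count `3 ^ k` comes from
choosing the two points independently in each block.
-/

open Finset Function

section OddSunflower

variable [DecidableEq α]

theorem sum_card_filter_mem_eq_sum_card_inter (H : Finset (Finset α)) (A : Finset α) :
    ∑ x ∈ A, #{S ∈ H | x ∈ S} = ∑ S ∈ H, #(S ∩ A) := by
  simp_rw [inter_comm _ A, ← filter_mem_eq_inter, card_filter]
  exact sum_comm

theorem IsOddSunflower.exists_notMem_of_odd_card {H : Finset (Finset α)} (hH : IsOddSunflower H)
    {A : Finset α} (hA : Odd #A) (heven : ∀ S ∈ H, Even #(S ∩ A)) :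
    ∃ z ∈ A, ∀ S ∈ H, z ∉ S := by
  by_contra! hcover
  have hdeg : ∀ x ∈ A, Odd #{S ∈ H | x ∈ S} := fun x hx ↦ by
    obtain ⟨S, hS, hxS⟩ := hcover x hx
    exact hH.2.2 x (mem_sup.2 ⟨S, hS, hxS⟩)
  have hodd : Odd (∑ x ∈ A, #{S ∈ H | x ∈ S}) := by
    rwa [odd_sum_iff_odd_card_odd, filter_true_of_mem hdeg]
  rw [sum_card_filter_mem_eq_sum_card_inter] at hodd
  exact Nat.not_even_iff_odd.2 hodd (even_sum _ heven)

end OddSunflower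

section Blocks

variable [DecidableEq α] {ι : Type*} [Fintype ι] {B : ι → Finset α}

theorem eq_biUnion_inter_of_subset {S : Finset α} (hS : S ⊆ univ.biUnion B) :
    S = univ.biUnion fun i ↦ S ∩ B i := by
  rw [← inter_biUnion, inter_eq_left.2 hS]

theorem eq_of_forall_inter_eq {S T : Finset α} (hS : S ⊆ univ.biUnion B)
    (hT : T ⊆ univ.biUnion B) (h : ∀ i, S ∩ B i = T ∩ B i) : S = T := by
  rw [eq_biUnion_inter_of_subset hS, eq_biUnion_inter_of_subset hT]
  simp_rw [h]

theorem biUnion_inter_eq_of_subset (hB : Pairwise (Disjoint on B)) {f : ι → Finset α}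
    (hf : ∀ i, f i ⊆ B i) (i : ι) : univ.biUnion f ∩ B i = f i := by
  ext x
  simp only [mem_inter, mem_biUnion, mem_univ, true_and]
  refine ⟨fun ⟨⟨j, hxj⟩, hxi⟩ ↦ ?_, fun hx ↦ ⟨⟨i, hx⟩, hf i hx⟩⟩
  obtain rfl : j = i := by
    by_contra hji
    exact disjoint_left.1 (hB hji) (hf j hxj) hxi
  exact hxj

end Blocks

section BlockFamily

variable [DecidableEq α] {k : ℕ} {X : Finset α} {B : Fin k → Finset α}

@[simp]
theorem mem_blockFamily {S : Finset α} :
    S ∈ blockFamily k X B ↔ S ⊆ X ∧ ∀ i, #(S ∩ B i) = 2 := by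
  simp [blockFamily]

theorem nonempty_of_mem_blockFamily (hk : 0 < k) {S : Finset α} (hS : S ∈ blockFamily k X B) :
    S.Nonempty :=
  (card_pos.1 (by rw [(mem_blockFamily.1 hS).2 ⟨0, hk⟩]; norm_num)).mono inter_subset_left

theorem isAntichainFamily_blockFamily (hX : X ⊆ univ.biUnion B) :
    IsAntichainFamily (blockFamily k X B) := by
  intro S hS T hT hST
  rw [mem_blockFamily] at hS hT
  refine eq_of_forall_inter_eq (hS.1.trans hX) (hT.1.trans hX) fun i ↦ ?_
  exact eq_of_subset_of_card_le (inter_subset_inter_right hST) (by rw [hS.2 i, hT.2 i])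

theorem oddSunflowerFree_blockFamily (hB : ∀ i, #(B i) = 3) (hX : X ⊆ univ.biUnion B) :
    OddSunflowerFree (blockFamily k X B) := by
  intro H hHF hH
  have hmem : ∀ S ∈ H, S ⊆ univ.biUnion B ∧ ∀ i, #(S ∩ B i) = 2 := fun S hS ↦
    (mem_blockFamily.1 (hHF hS)).imp_left (·.trans hX)
  have hmiss : ∀ i, ∃ z ∈ B i, ∀ S ∈ H, z ∉ S := fun i ↦
    hH.exists_notMem_of_odd_card (by rw [hB i]; decide)
      fun S hS ↦ by rw [(hmem S hS).2 i]; decide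
  choose z hzB hzH using hmiss
  have hinter : ∀ S ∈ H, ∀ i, S ∩ B i = (B i).erase (z i) := fun S hS i ↦
    eq_of_subset_of_card_le
      (fun x hx ↦ mem_erase.2 ⟨by rintro rfl; exact hzH i S hS (mem_inter.1 hx).1,
        (mem_inter.1 hx).2⟩)
      (by rw [card_erase_of_mem (hzB i), hB i, (hmem S hS).2 i])
  obtain ⟨S, hS, T, hT, hST⟩ := one_lt_card.1 hH.1
  exact hST <| eq_of_forall_inter_eq (hmem S hS).1 (hmem T hT).1 fun i ↦ by
    rw [hinter S hS, hinter T hT]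

theorem card_blockFamily (hdisj : Pairwise (Disjoint on B)) (hX : X = univ.biUnion B) :
    #(blockFamily k X B) = ∏ i, (#(B i)).choose 2 := by
  have himage : blockFamily k X B =
      (Fintype.piFinset fun i ↦ (B i).powersetCard 2).image univ.biUnion := by
    ext S
    simp only [mem_blockFamily, mem_image, Fintype.mem_piFinset, mem_powersetCard]
    constructor
    · rintro ⟨hSX, hS⟩
      exact ⟨fun i ↦ S ∩ B i, fun i ↦ ⟨inter_subset_right, hS i⟩,
        (eq_biUnion_inter_of_subset (hX ▸ hSX)).symm⟩
    · rintro ⟨f, hf, rfl⟩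
      refine ⟨hX ▸ biUnion_mono fun i _ ↦ (hf i).1, fun i ↦ ?_⟩
      rw [biUnion_inter_eq_of_subset hdisj (fun j ↦ (hf j).1), (hf i).2]
  rw [himage, card_image_of_injOn, Fintype.card_piFinset]
  · simp_rw [card_powersetCard]
  · intro f hf g hg hfg
    simp only [mem_coe, Fintype.mem_piFinset, mem_powersetCard] at hf hg
    funext i
    rw [← biUnion_inter_eq_of_subset hdisj (fun j ↦ (hf j).1) i, hfg,
      biUnion_inter_eq_of_subset hdisj (fun j ↦ (hg j).1) i]

end BlockFamily

def tripleBlocks (k : ℕ) (i : Fin k) : Finset ℕ := Icc (3 * i + 1) (3 * i + 3)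

theorem card_tripleBlocks (k : ℕ) (i : Fin k) : #(tripleBlocks k i) = 3 := by
  simp [tripleBlocks]

theorem pairwise_disjoint_tripleBlocks (k : ℕ) : Pairwise (Disjoint on tripleBlocks k) := by
  intro i j hij
  have : (i : ℕ) ≠ j := Fin.val_ne_of_ne hij
  simp only [Function.onFun, tripleBlocks, disjoint_left, mem_Icc]
  omega

theorem biUnion_tripleBlocks (k : ℕ) : univ.biUnion (tripleBlocks k) = Icc 1 (3 * k) := by
  ext x
  simp only [tripleBlocks, mem_biUnion, mem_univ, true_and, mem_Icc]
  constructor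
  · rintro ⟨i, hi⟩
    have := i.isLt
    omega
  · intro hx
    exact ⟨⟨(x - 1) / 3, by omega⟩, by simp only; omega⟩

theorem blockFamily_oddSunflowerFree_general {α : Type*} [DecidableEq α] (k : ℕ) (hk : 1 ≤ k)
    (X : Finset α) (B : Fin k → Finset α)
    (hB : ∀ i, (B i).card = 3) (hdisj : ∀ i j, i ≠ j → Disjoint (B i) (B j))
    (hX : X = Finset.univ.biUnion B) :
    ((∀ S ∈ blockFamily k X B, S.Nonempty) ∧
      IsAntichainFamily (blockFamily k X B) ∧
      OddSunflowerFree (blockFamily k X B) ∧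
      (blockFamily k X B).card = 3 ^ k) ∧
    (∃ G : Finset (Finset ℕ), (∀ S ∈ G, S.Nonempty ∧ S ⊆ Finset.Icc 1 (3 * k)) ∧
      OddSunflowerFree G ∧ G.card = 3 ^ k) := by
  refine ⟨⟨fun S hS ↦ nonempty_of_mem_blockFamily hk hS, isAntichainFamily_blockFamily hX.subset,
    oddSunflowerFree_blockFamily hB hX.subset, by simp [card_blockFamily hdisj hX, hB]⟩,
    blockFamily k (Icc 1 (3 * k)) (tripleBlocks k), fun S hS ↦
      ⟨nonempty_of_mem_blockFamily hk hS, (mem_blockFamily.1 hS).1⟩,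
    oddSunflowerFree_blockFamily (card_tripleBlocks k) (biUnion_tripleBlocks k).ge, ?_⟩
  simp [card_blockFamily (pairwise_disjoint_tripleBlocks k) (biUnion_tripleBlocks k).symm,
    card_tripleBlocks]

/-- Construction 1: for a `3k`-element set `X` partitioned into `k` blocks of size `3`, the
family of all subsets intersecting each block in exactly two elements is an
odd-sunflower-free antichain of size `3^k`.  In particular, for every `k ≥ 1` there is an
odd-sunflower-free family of `3^k` nonempty subsets of a `3k`-element set. -/
theorem blockFamily_oddSunflowerFree {α : Type*} [DecidableEq α] (k : ℕ) (hk : 1 ≤ k)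
    (X : Finset α) (B : Fin k → Finset α) (hXcard : X.card = 3 * k)
    (hB : ∀ i, (B i).card = 3) (hdisj : ∀ i j, i ≠ j → Disjoint (B i) (B j))
    (hX : X = Finset.univ.biUnion B) :
    ((∀ S ∈ blockFamily k X B, S.Nonempty) ∧
      IsAntichainFamily (blockFamily k X B) ∧
      OddSunflowerFree (blockFamily k X B) ∧
      (blockFamily k X B).card = 3 ^ k) ∧
    (∃ G : Finset (Finset ℕ), (∀ S ∈ G, S.Nonempty ∧ S ⊆ Finset.Icc 1 (3 * k)) ∧
      OddSunflowerFree G ∧ G.card = 3 ^ k) :=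
  blockFamily_oddSunflowerFree_general k hk X B hB hdisj hX
end

section
/- There exists an odd-sunflower-free antichain consisting of 3^10 nonempty subsets of a 27-element set; explicitly, the wreath product C_9 ≀ C_3 is a 16-uniform odd-sunflower-free antichain of 3^10 subsets of a 27-element set. -/
variable {α : Type*}

namespace WAux

lemma mem_Cfam {n : ℕ} {F : Finset ℕ} :
    F ∈ Cfam n ↔ F ⊆ Finset.Icc 1 n ∧ F.card = n - 1 := by
  simp [Cfam, Finset.mem_powersetCard]

def row (S : Finset (ℕ × ℕ)) : Finset ℕ := S.image Prod.fst

def col (S : Finset (ℕ × ℕ)) (i : ℕ) : Finset ℕ :=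
  (S.filter (fun p => p.1 = i)).image Prod.snd

abbrev W : Set (Finset (ℕ × ℕ)) :=
  Wreath ((Cfam 9 : Finset (Finset ℕ)) : Set (Finset ℕ))
    ((Cfam 3 : Finset (Finset ℕ)) : Set (Finset ℕ))

lemma mem_biUnion_prod {F : Finset ℕ} {g : ℕ → Finset ℕ} {p : ℕ × ℕ} :
    p ∈ F.biUnion (fun i => ({i} : Finset ℕ) ×ˢ g i) ↔ p.1 ∈ F ∧ p.2 ∈ g p.1 := by
  simp only [Finset.mem_biUnion, Finset.mem_product, Finset.mem_singleton]
  constructor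
  · rintro ⟨a, ha, h1, h2⟩
    subst h1
    exact ⟨ha, h2⟩
  · rintro ⟨h1, h2⟩
    exact ⟨p.1, h1, rfl, h2⟩

lemma spec {S : Finset (ℕ × ℕ)} (hS : S ∈ W) :
    row S ∈ Cfam 9 ∧ (∀ i ∈ row S, col S i ∈ Cfam 3) ∧
      ∀ p : ℕ × ℕ, p ∈ S ↔ p.1 ∈ row S ∧ p.2 ∈ col S p.1 := by
  obtain ⟨F, hF, g, hg, rfl⟩ := hS
  have hgne : ∀ i ∈ F, (g i).Nonempty := by
    intro i hi
    have h2 : (g i).card = 2 := (mem_Cfam.mp (hg i hi)).2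
    exact Finset.card_pos.mp (by omega)
  have hrow : row (F.biUnion (fun i => ({i} : Finset ℕ) ×ˢ g i)) = F := by
    ext i
    simp only [row, Finset.mem_image]
    constructor
    · rintro ⟨p, hp, rfl⟩
      exact (mem_biUnion_prod.mp hp).1
    · intro hi
      obtain ⟨j, hj⟩ := hgne i hi
      exact ⟨(i, j), mem_biUnion_prod.mpr ⟨hi, hj⟩, rfl⟩
  have hcol : ∀ i ∈ F, col (F.biUnion (fun i => ({i} : Finset ℕ) ×ˢ g i)) i = g i := by
    intro i hi
    ext j
    simp only [col, Finset.mem_image, Finset.mem_filter]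
    constructor
    · rintro ⟨p, ⟨hp, hpi⟩, rfl⟩
      have := mem_biUnion_prod.mp hp
      rw [hpi] at this
      exact this.2
    · intro hj
      exact ⟨(i, j), ⟨mem_biUnion_prod.mpr ⟨hi, hj⟩, rfl⟩, rfl⟩
  rw [hrow]
  refine ⟨hF, fun i hi => (hcol i hi) ▸ hg i hi, fun p => ?_⟩
  rw [mem_biUnion_prod]
  by_cases hp : p.1 ∈ F
  · rw [hcol p.1 hp]
  · simp [hp]

lemma basic {S : Finset (ℕ × ℕ)} (hS : S ∈ W) :
    S.Nonempty ∧ S.card = 16 ∧ S ⊆ Finset.Icc 1 9 ×ˢ Finset.Icc 1 3 := by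
  obtain ⟨F, hF, g, hg, rfl⟩ := hS
  have hF' := mem_Cfam.mp hF
  have hcard : (F.biUnion (fun i => ({i} : Finset ℕ) ×ˢ g i)).card = 16 := by
    rw [Finset.card_biUnion]
    · have : ∀ i ∈ F, (({i} : Finset ℕ) ×ˢ g i).card = 2 := by
        intro i hi
        rw [Finset.card_product, Finset.card_singleton, one_mul]
        exact (mem_Cfam.mp (hg i hi)).2
      rw [Finset.sum_congr rfl this, Finset.sum_const, hF'.2]
      norm_num
    · intro i hi j hj hij
      simp only [Finset.disjoint_left]
      intro p hp hq
      have h1 := Finset.mem_singleton.mp (Finset.mem_product.mp hp).1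
      have h2 := Finset.mem_singleton.mp (Finset.mem_product.mp hq).1
      exact hij (h1.symm.trans h2)
  refine ⟨Finset.card_pos.mp (by omega), hcard, ?_⟩
  intro p hp
  obtain ⟨h1, h2⟩ := mem_biUnion_prod.mp hp
  exact Finset.mem_product.mpr ⟨hF'.1 h1, (mem_Cfam.mp (hg p.1 h1)).1 h2⟩

lemma antichain : IsAntichainFamilyS W := by
  intro S hS T hT hsub
  obtain ⟨hS9, hScol, hSmem⟩ := spec hS
  obtain ⟨hT9, hTcol, hTmem⟩ := spec hT
  have hrowsub : row S ⊆ row T := by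
    intro i hi
    have h2 : (col S i).card = 2 := (mem_Cfam.mp (hScol i hi)).2
    obtain ⟨j, hj⟩ : (col S i).Nonempty := Finset.card_pos.mp (by omega)
    have : (i, j) ∈ T := hsub ((hSmem (i, j)).mpr ⟨hi, hj⟩)
    exact ((hTmem (i, j)).mp this).1
  have hroweq : row S = row T := Finset.eq_of_subset_of_card_le hrowsub
    (le_of_eq ((mem_Cfam.mp hT9).2.trans (mem_Cfam.mp hS9).2.symm))
  have hcoleq : ∀ i ∈ row S, col S i = col T i := by
    intro i hi
    have hiT : i ∈ row T := hroweq ▸ hi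
    refine Finset.eq_of_subset_of_card_le (fun j hj => ?_)
      (le_of_eq ((mem_Cfam.mp (hTcol i hiT)).2.trans (mem_Cfam.mp (hScol i hi)).2.symm))
    exact ((hTmem (i, j)).mp (hsub ((hSmem (i, j)).mpr ⟨hi, hj⟩))).2
  ext p
  rw [hSmem p, hTmem p, hroweq]
  by_cases hp : p.1 ∈ row T
  · rw [hcoleq p.1 (hroweq ▸ hp)]
  · simp [hp]

lemma sum_mod_two {β : Type*} [DecidableEq β] (s : Finset β) (f : β → ℕ)
    (h : ∀ j ∈ s, f j % 2 = 1) : (∑ j ∈ s, f j) % 2 = s.card % 2 := by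
  classical
  induction s using Finset.induction_on with
  | empty => simp
  | @insert a s ha ih =>
    rw [Finset.sum_insert ha, Finset.card_insert_of_notMem ha]
    have h1 := h a (Finset.mem_insert_self a s)
    have h2 := ih (fun j hj => h j (Finset.mem_insert_of_mem hj))
    omega

lemma key {H : Finset (Finset (ℕ × ℕ))} (hH : ↑H ⊆ W)
    (hodd : ∀ x ∈ H.sup id, Odd (H.filter (fun S => x ∈ S)).card) (i : ℕ)
    (hi : (H.filter (fun S => i ∈ row S)).Nonempty) :
    (H.filter (fun S => i ∈ row S)).card % 2 = 1 ∧
    ∀ S ∈ H, ∀ T ∈ H, i ∈ row S → i ∈ row T → col S i = col T i := by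
  classical
  have hspec := fun {S} (hS : S ∈ H) => spec (hH (Finset.mem_coe.mpr hS))
  set Hi := H.filter (fun S => i ∈ row S) with hHidef
  set U := (Finset.Icc 1 3).filter (fun j => ∃ S ∈ Hi, j ∈ col S i) with hUdef
  have hHimem : ∀ {S}, S ∈ Hi → S ∈ H ∧ i ∈ row S := fun hS => Finset.mem_filter.mp hS
  have hdeg : ∀ j : ℕ, H.filter (fun S => (i, j) ∈ S) = Hi.filter (fun S => j ∈ col S i) := by
    intro j
    rw [hHidef, Finset.filter_filter]
    apply Finset.filter_congr
    intro S hS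
    rw [(hspec hS).2.2 (i, j)]
  have hcol3 : ∀ S ∈ Hi, col S i ⊆ Finset.Icc 1 3 ∧ (col S i).card = 2 := by
    intro S hS
    obtain ⟨hSH, hiS⟩ := hHimem hS
    exact mem_Cfam.mp ((hspec hSH).2.1 i hiS)
  have hsum : ∑ j ∈ Finset.Icc 1 3, (Hi.filter (fun S => j ∈ col S i)).card = 2 * Hi.card := by
    simp only [Finset.card_filter]
    rw [Finset.sum_comm]
    have : ∀ S ∈ Hi, (∑ j ∈ Finset.Icc 1 3, if j ∈ col S i then 1 else 0) = 2 := by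
      intro S hS
      rw [← Finset.card_filter, Finset.filter_mem_eq_inter,
        Finset.inter_eq_right.mpr (hcol3 S hS).1]
      exact (hcol3 S hS).2
    rw [Finset.sum_congr rfl this, Finset.sum_const, smul_eq_mul, mul_comm]
  have hsumU : ∑ j ∈ U, (Hi.filter (fun S => j ∈ col S i)).card = 2 * Hi.card := by
    rw [← hsum]
    apply Finset.sum_subset (Finset.filter_subset _ _)
    intro j hj hjU
    rw [Finset.card_eq_zero, Finset.filter_eq_empty_iff]
    intro S hS hcol
    exact hjU (Finset.mem_filter.mpr ⟨hj, S, hS, hcol⟩)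
  have hoddU : ∀ j ∈ U, (Hi.filter (fun S => j ∈ col S i)).card % 2 = 1 := by
    intro j hjU
    rw [← hdeg j]
    obtain ⟨hj3, S, hS, hcolj⟩ := Finset.mem_filter.mp hjU
    obtain ⟨hSH, hiS⟩ := hHimem hS
    have hmemS : (i, j) ∈ S := ((hspec hSH).2.2 (i, j)).mpr ⟨hiS, hcolj⟩
    have hmemsup : (i, j) ∈ H.sup id := Finset.mem_sup.mpr ⟨S, hSH, hmemS⟩
    exact Nat.odd_iff.mp (hodd _ hmemsup)
  have hUeven : U.card % 2 = 0 := by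
    have h1 := sum_mod_two U _ hoddU
    rw [hsumU] at h1
    omega
  obtain ⟨S₀, hS₀⟩ := hi
  have hsubU : ∀ S ∈ Hi, col S i ⊆ U := by
    intro S hS j hj
    exact Finset.mem_filter.mpr ⟨(hcol3 S hS).1 hj, S, hS, hj⟩
  have hU3 : U.card ≤ 3 := by
    have := Finset.card_le_card (Finset.filter_subset
      (fun j => ∃ S ∈ Hi, j ∈ col S i) (Finset.Icc 1 3))
    simpa [Nat.card_Icc] using this
  have hU2 : 2 ≤ U.card := by
    have := Finset.card_le_card (hsubU S₀ hS₀)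
    rw [(hcol3 S₀ hS₀).2] at this
    exact this
  have hUcard2 : U.card = 2 := by omega
  have hcolU : ∀ S ∈ Hi, col S i = U := fun S hS =>
    Finset.eq_of_subset_of_card_le (hsubU S hS) (by rw [(hcol3 S hS).2, hUcard2])
  constructor
  · obtain ⟨j, hjU⟩ : U.Nonempty := Finset.card_pos.mp (by omega)
    have hfull : Hi.filter (fun S => j ∈ col S i) = Hi := by
      apply Finset.filter_true_of_mem
      intro S hS
      rw [hcolU S hS]
      exact hjU
    have := hoddU j hjU
    rwa [hfull] at this
  · intro S hS T hT hiS hiT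
    rw [hcolU S (Finset.mem_filter.mpr ⟨hS, hiS⟩), hcolU T (Finset.mem_filter.mpr ⟨hT, hiT⟩)]

lemma eq_erase {F : Finset ℕ} (hF : F ⊆ Finset.Icc 1 9) (hc : F.card = 8) {i : ℕ}
    (hi : i ∈ Finset.Icc 1 9) (hiF : i ∉ F) : F = (Finset.Icc 1 9).erase i := by
  apply Finset.eq_of_subset_of_card_le
  · intro x hx
    exact Finset.mem_erase.mpr ⟨fun h => hiF (h ▸ hx), hF hx⟩
  · rw [Finset.card_erase_of_mem hi, hc, Nat.card_Icc]

lemma osf : OddSunflowerFreeS W := by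
  classical
  rintro H hH ⟨hcard, hne, hodd⟩
  have hspec := fun {S} (hS : S ∈ H) => spec (hH (Finset.mem_coe.mpr hS))
  -- row is injective on H
  have hrowinj : ∀ S ∈ H, ∀ T ∈ H, row S = row T → S = T := by
    intro S hS T hT hrw
    ext p
    rw [(hspec hS).2.2 p, (hspec hT).2.2 p, hrw]
    by_cases hp : p.1 ∈ row T
    · have hiS : p.1 ∈ row S := hrw ▸ hp
      have hne' : (H.filter (fun X => p.1 ∈ row X)).Nonempty :=
        ⟨S, Finset.mem_filter.mpr ⟨hS, hiS⟩⟩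
      rw [(key hH hodd p.1 hne').2 S hS T hT hiS hp]
    · simp [hp]
  set R := H.image row with hRdef
  have hRcard : R.card = H.card :=
    Finset.card_image_of_injOn (fun S hS T hT h =>
      hrowinj S (Finset.mem_coe.mp hS) T (Finset.mem_coe.mp hT) h)
  have hRC : ∀ F ∈ R, F ⊆ Finset.Icc 1 9 ∧ F.card = 8 := by
    intro F hF
    obtain ⟨S, hS, rfl⟩ := Finset.mem_image.mp hF
    exact mem_Cfam.mp (hspec hS).1
  have hRdeg : ∀ i : ℕ, R.filter (fun F => i ∈ F) = (H.filter (fun S => i ∈ row S)).image row := by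
    intro i
    ext F
    simp only [Finset.mem_filter, Finset.mem_image, hRdef]
    constructor
    · rintro ⟨⟨S, hS, rfl⟩, hi⟩
      exact ⟨S, ⟨hS, hi⟩, rfl⟩
    · rintro ⟨S, ⟨hS, hi⟩, rfl⟩
      exact ⟨⟨S, hS, rfl⟩, hi⟩
  have hRdegcard : ∀ i : ℕ, (R.filter (fun F => i ∈ F)).card = (H.filter (fun S => i ∈ row S)).card := by
    intro i
    rw [hRdeg i]
    apply Finset.card_image_of_injOn
    intro S hS T hT h
    exact hrowinj S (Finset.mem_filter.mp (Finset.mem_coe.mp hS)).1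
      T (Finset.mem_filter.mp (Finset.mem_coe.mp hT)).1 h
  have hRodd : ∀ i : ℕ, (R.filter (fun F => i ∈ F)).Nonempty →
      (R.filter (fun F => i ∈ F)).card % 2 = 1 := by
    intro i hne'
    rw [hRdegcard i]
    apply (key hH hodd i ?_).1
    obtain ⟨F, hF⟩ := hne'
    rw [hRdeg i] at hF
    obtain ⟨S, hS, _⟩ := Finset.mem_image.mp hF
    exact ⟨S, hS⟩
  -- pick two distinct members
  have h2R : 2 ≤ R.card := by rw [hRcard]; exact hcard
  obtain ⟨F₀, hF₀, F₁, hF₁, hF01⟩ := Finset.one_lt_card.mp (by omega : 1 < R.card)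
  obtain ⟨a, ha9, haF₀⟩ : ∃ a ∈ Finset.Icc 1 9, a ∉ F₀ := by
    by_contra h
    push_neg at h
    have hsub : Finset.Icc 1 9 ⊆ F₀ := fun x hx => h x hx
    have := Finset.card_le_card hsub
    rw [(hRC F₀ hF₀).2, Nat.card_Icc] at this
    omega
  have haF₁ : a ∈ F₁ := by
    by_contra h
    exact hF01 ((eq_erase (hRC F₀ hF₀).1 (hRC F₀ hF₀).2 ha9 haF₀).trans
      (eq_erase (hRC F₁ hF₁).1 (hRC F₁ hF₁).2 ha9 h).symm)
  have hsplit : ∀ i : ℕ, (R.filter (fun F => i ∈ F)).card + (R.filter (fun F => ¬ i ∈ F)).card = R.card :=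
    fun i => Finset.card_filter_add_card_filter_not _
  have hnota : (R.filter (fun F => ¬ a ∈ F)).card = 1 := by
    have hle : (R.filter (fun F => ¬ a ∈ F)).card ≤ 1 := by
      apply Finset.card_le_one.mpr
      intro F hF F' hF'
      obtain ⟨hFR, hFa⟩ := Finset.mem_filter.mp hF
      obtain ⟨hFR', hFa'⟩ := Finset.mem_filter.mp hF'
      exact (eq_erase (hRC F hFR).1 (hRC F hFR).2 ha9 hFa).trans
        (eq_erase (hRC F' hFR').1 (hRC F' hFR').2 ha9 hFa').symm
    have hge : 0 < (R.filter (fun F => ¬ a ∈ F)).card :=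
      Finset.card_pos.mpr ⟨F₀, Finset.mem_filter.mpr ⟨hF₀, haF₀⟩⟩
    omega
  have hdega : (R.filter (fun F => a ∈ F)).card % 2 = 1 :=
    hRodd a ⟨F₁, Finset.mem_filter.mpr ⟨hF₁, haF₁⟩⟩
  have hReven : R.card % 2 = 0 := by
    have := hsplit a
    omega
  -- R has at most 9 members
  have hR9 : R.card ≤ 9 := by
    have hsub : R ⊆ Cfam 9 := by
      intro F hF
      exact mem_Cfam.mpr ⟨(hRC F hF).1, (hRC F hF).2⟩
    have := Finset.card_le_card hsub
    have hc9 : (Cfam 9).card = 9 := by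
      rw [Cfam, Finset.card_powersetCard, Nat.card_Icc]
      norm_num
    omega
  -- there is an element in every member of R
  have hcover : ∃ i ∈ Finset.Icc 1 9, ∀ F ∈ R, i ∈ F := by
    by_contra h
    push_neg at h
    have hinj : ∀ i ∈ Finset.Icc 1 9, (Finset.Icc 1 9).erase i ∈ R := by
      intro i hi
      obtain ⟨F, hF, hiF⟩ := h i hi
      exact (eq_erase (hRC F hF).1 (hRC F hF).2 hi hiF) ▸ hF
    have h9le : 9 ≤ R.card := by
      have := Finset.card_le_card_of_injOn (fun i => (Finset.Icc 1 9).erase i)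
        (fun i hi => hinj i hi) ?_
      · rwa [Nat.card_Icc] at this
      · intro i hi j hj hij
        simp only at hij
        by_contra hne'
        have hmem : i ∈ (Finset.Icc 1 9).erase j :=
          Finset.mem_erase.mpr ⟨hne', Finset.mem_coe.mp hi⟩
        rw [← hij] at hmem
        exact (Finset.mem_erase.mp hmem).1 rfl
    omega
  obtain ⟨i, hi9, hicov⟩ := hcover
  have hfull : R.filter (fun F => i ∈ F) = R := Finset.filter_true_of_mem hicov
  have := hRodd i (by rw [hfull]; exact ⟨F₀, hF₀⟩)
  rw [hfull] at this
  omega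

def phi (F : Finset ℕ) (g : ∀ i ∈ F, Finset ℕ) : Finset (ℕ × ℕ) :=
  F.attach.biUnion fun i => ({i.1} : Finset ℕ) ×ˢ g i.1 i.2

lemma mem_phi {F : Finset ℕ} {g : ∀ i ∈ F, Finset ℕ} {p : ℕ × ℕ} :
    p ∈ phi F g ↔ ∃ h : p.1 ∈ F, p.2 ∈ g p.1 h := by
  simp only [phi, Finset.mem_biUnion, Finset.mem_attach, Finset.mem_product,
    Finset.mem_singleton, true_and]
  constructor
  · rintro ⟨⟨a, ha⟩, h1, h2⟩
    cases p
    simp only at h1 h2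
    subst h1
    exact ⟨ha, h2⟩
  · rintro ⟨h, hg⟩
    exact ⟨⟨p.1, h⟩, rfl, hg⟩

lemma row_phi {F : Finset ℕ} {g : ∀ i ∈ F, Finset ℕ}
    (hg : ∀ i (h : i ∈ F), (g i h).Nonempty) : row (phi F g) = F := by
  ext i
  simp only [row, Finset.mem_image]
  constructor
  · rintro ⟨p, hp, rfl⟩
    exact (mem_phi.mp hp).1
  · intro hi
    obtain ⟨j, hj⟩ := hg i hi
    exact ⟨(i, j), mem_phi.mpr ⟨hi, hj⟩, rfl⟩

set_option maxRecDepth 8000 in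
lemma ncard_W : W.ncard = 3 ^ 10 := by
  classical
  set sig := (Cfam 9).sigma (fun F => F.pi fun _ => Cfam 3) with hsigdef
  have hmemsig : ∀ {x : Σ F : Finset ℕ, ∀ i ∈ F, Finset ℕ},
      x ∈ sig ↔ x.1 ∈ Cfam 9 ∧ ∀ i (h : i ∈ x.1), x.2 i h ∈ Cfam 3 := by
    intro x
    rw [hsigdef, Finset.mem_sigma]
    simp [Finset.mem_pi]
  have himg : W = ↑(sig.image (fun x => phi x.1 x.2)) := by
    ext S
    simp only [Finset.coe_image, Set.mem_image, Finset.mem_coe]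
    constructor
    · rintro ⟨F, hF, g, hg, rfl⟩
      refine ⟨⟨F, fun i _ => g i⟩, hmemsig.mpr ⟨hF, fun i h => hg i h⟩, ?_⟩
      ext p
      rw [mem_phi, mem_biUnion_prod]
      constructor
      · rintro ⟨h, hp⟩
        exact ⟨h, hp⟩
      · rintro ⟨h, hp⟩
        exact ⟨h, hp⟩
    · rintro ⟨⟨F, g⟩, hx, rfl⟩
      obtain ⟨hF, hg⟩ := hmemsig.mp hx
      simp only at hF hg
      refine ⟨F, Finset.mem_coe.mpr hF, fun i => if h : i ∈ F then g i h else ∅,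
        fun i hi => by simp only [dif_pos hi]; exact Finset.mem_coe.mpr (hg i hi), ?_⟩
      ext p
      rw [mem_phi, mem_biUnion_prod]
      constructor
      · rintro ⟨h, hp⟩
        exact ⟨h, by rw [dif_pos h]; exact hp⟩
      · rintro ⟨h, hp⟩
        rw [dif_pos h] at hp
        exact ⟨h, hp⟩
  have hinj : Set.InjOn (fun x : Σ F : Finset ℕ, ∀ i ∈ F, Finset ℕ => phi x.1 x.2) ↑sig := by
    rintro ⟨F, g⟩ hx ⟨F', g'⟩ hx' heq
    obtain ⟨hF, hg⟩ := hmemsig.mp (Finset.mem_coe.mp hx)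
    obtain ⟨hF', hg'⟩ := hmemsig.mp (Finset.mem_coe.mp hx')
    simp only at heq hF hg hF' hg'
    have hgne : ∀ i (h : i ∈ F), (g i h).Nonempty := by
      intro i h
      have := (mem_Cfam.mp (hg i h)).2
      exact Finset.card_pos.mp (by omega)
    have hgne' : ∀ i (h : i ∈ F'), (g' i h).Nonempty := by
      intro i h
      have := (mem_Cfam.mp (hg' i h)).2
      exact Finset.card_pos.mp (by omega)
    have hFF : F = F' := by
      rw [← row_phi hgne, ← row_phi hgne', heq]
    subst hFF
    have hgg : g = g' := by
      funext i h
      ext j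
      constructor
      · intro hj
        obtain ⟨h', hj'⟩ := mem_phi.mp (heq ▸ mem_phi.mpr ⟨h, hj⟩ : (i, j) ∈ phi F g')
        exact hj'
      · intro hj
        obtain ⟨h', hj'⟩ := mem_phi.mp (heq ▸ mem_phi.mpr ⟨h, hj⟩ : (i, j) ∈ phi F g)
        exact hj'
    rw [hgg]
  rw [himg, Set.ncard_coe_finset, Finset.card_image_of_injOn hinj, hsigdef,
    Finset.card_sigma]
  have hpi : ∀ F ∈ Cfam 9, (F.pi fun _ => Cfam 3).card = 3 ^ 8 := by
    intro F hF
    rw [Finset.card_pi]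
    have hc3 : (Cfam 3).card = 3 := by
      rw [Cfam, Finset.card_powersetCard, Nat.card_Icc]
      norm_num
    rw [Finset.prod_const, (mem_Cfam.mp hF).2, hc3]
  rw [Finset.sum_congr rfl hpi, Finset.sum_const]
  have hc9 : (Cfam 9).card = 9 := by
    rw [Cfam, Finset.card_powersetCard, Nat.card_Icc]
    norm_num
  rw [hc9, smul_eq_mul]
  norm_num

end WAux

/-- Construction 2: the wreath product `C_9 ≀ C_3` is a 16-uniform odd-sunflower-free
antichain of `3^10` nonempty subsets of a 27-element set. -/
theorem wreath_C9_C3 :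
    (∀ S ∈ Wreath ((Cfam 9 : Finset (Finset ℕ)) : Set (Finset ℕ))
        ((Cfam 3 : Finset (Finset ℕ)) : Set (Finset ℕ)),
      S.Nonempty ∧ S.card = 16 ∧ S ⊆ Finset.Icc 1 9 ×ˢ Finset.Icc 1 3) ∧
    (Finset.Icc 1 9 ×ˢ Finset.Icc 1 3 : Finset (ℕ × ℕ)).card = 27 ∧
    IsAntichainFamilyS (Wreath ((Cfam 9 : Finset (Finset ℕ)) : Set (Finset ℕ))
        ((Cfam 3 : Finset (Finset ℕ)) : Set (Finset ℕ))) ∧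
    OddSunflowerFreeS (Wreath ((Cfam 9 : Finset (Finset ℕ)) : Set (Finset ℕ))
        ((Cfam 3 : Finset (Finset ℕ)) : Set (Finset ℕ))) ∧
    (Wreath ((Cfam 9 : Finset (Finset ℕ)) : Set (Finset ℕ))
        ((Cfam 3 : Finset (Finset ℕ)) : Set (Finset ℕ))).ncard = 3 ^ 10 := by
  refine ⟨fun S hS => WAux.basic hS, ?_, WAux.antichain, WAux.osf, WAux.ncard_W⟩
  rw [Finset.card_product]
  simp [Nat.card_Icc]
end

section
/- There exists an odd-sunflower-free antichain consisting of 160511 · 3^1605100 nonempty subsets of a set with 4333797 elements; explicitly, the wreath product C_160511 ≀ (C_9 ≀ C_3) is such a family. -/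
variable {α : Type*}

section Aux

open Finset

set_option linter.unusedSectionVars false

variable {β : Type*} [DecidableEq α] [DecidableEq β]

/-- Projection of a set of pairs to its first coordinates. -/
def projF (S : Finset (α × β)) : Finset α := S.image Prod.fst

/-- Fiber of a set of pairs over a first coordinate. -/
def fibF (S : Finset (α × β)) (i : α) : Finset β :=
  (S.filter (fun p => p.1 = i)).image Prod.snd

lemma mem_fibF {S : Finset (α × β)} {i : α} {b : β} : b ∈ fibF S i ↔ (i, b) ∈ S := by
  constructor
  · intro h
    simp only [fibF, mem_image, mem_filter] at h
    obtain ⟨p, ⟨hp, hp1⟩, hp2⟩ := h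
    have : p = (i, b) := Prod.ext hp1 hp2
    rwa [this] at hp
  · intro h
    simp only [fibF, mem_image, mem_filter]
    exact ⟨(i, b), ⟨h, rfl⟩, rfl⟩

lemma mem_projF {S : Finset (α × β)} {i : α} : i ∈ projF S ↔ ∃ b, (i, b) ∈ S := by
  simp only [projF, mem_image]
  constructor
  · rintro ⟨p, hp, rfl⟩; exact ⟨p.2, hp⟩
  · rintro ⟨b, hb⟩; exact ⟨(i, b), hb, rfl⟩

lemma eq_of_fibF {S T : Finset (α × β)} (h : ∀ i, fibF S i = fibF T i) : S = T := by
  ext ⟨i, b⟩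
  rw [← mem_fibF, ← mem_fibF, h]

lemma fibF_eq_empty {S : Finset (α × β)} {i : α} (h : i ∉ projF S) : fibF S i = ∅ := by
  rw [eq_empty_iff_forall_notMem]
  intro b hb
  exact h (mem_projF.2 ⟨b, mem_fibF.1 hb⟩)

lemma fibF_nonempty {S : Finset (α × β)} {i : α} (h : i ∈ projF S) : (fibF S i).Nonempty := by
  obtain ⟨b, hb⟩ := mem_projF.1 h
  exact ⟨b, mem_fibF.2 hb⟩

lemma wreath_spec {F : Set (Finset α)} {G : Set (Finset β)}
    (hGne : ∀ g ∈ G, Finset.Nonempty g) {S : Finset (α × β)} (hS : S ∈ Wreath F G) :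
    projF S ∈ F ∧ (∀ i ∈ projF S, fibF S i ∈ G) := by
  obtain ⟨F₀, hF₀, g, hg, rfl⟩ := hS
  have hmem : ∀ i b, (i, b) ∈ F₀.biUnion (fun i => ({i} : Finset α) ×ˢ g i) ↔
      i ∈ F₀ ∧ b ∈ g i := by
    intro i b
    simp only [mem_biUnion, mem_product, mem_singleton]
    constructor
    · rintro ⟨j, hj, rfl, hb⟩; exact ⟨hj, hb⟩
    · rintro ⟨hi, hb⟩; exact ⟨i, hi, rfl, hb⟩
  have hproj : projF (F₀.biUnion (fun i => ({i} : Finset α) ×ˢ g i)) = F₀ := by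
    ext i
    rw [mem_projF]
    constructor
    · rintro ⟨b, hb⟩; exact ((hmem i b).1 hb).1
    · intro hi
      obtain ⟨b, hb⟩ := hGne (g i) (hg i hi)
      exact ⟨b, (hmem i b).2 ⟨hi, hb⟩⟩
  refine ⟨by rw [hproj]; exact hF₀, ?_⟩
  intro i hi
  rw [hproj] at hi
  have : fibF (F₀.biUnion (fun i => ({i} : Finset α) ×ˢ g i)) i = g i := by
    ext b
    rw [mem_fibF, hmem]
    exact ⟨fun h => h.2, fun h => ⟨hi, h⟩⟩
  rw [this]
  exact hg i hi

lemma wreath_nonempty_subset {F : Set (Finset α)} {G : Set (Finset β)}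
    {A : Finset α} {B : Finset β}
    (hFne : ∀ f ∈ F, Finset.Nonempty f) (hGne : ∀ g ∈ G, Finset.Nonempty g)
    (hFA : ∀ f ∈ F, f ⊆ A) (hGB : ∀ g ∈ G, g ⊆ B)
    {S : Finset (α × β)} (hS : S ∈ Wreath F G) :
    S.Nonempty ∧ S ⊆ A ×ˢ B := by
  obtain ⟨hp, hf⟩ := wreath_spec hGne hS
  constructor
  · obtain ⟨i, hi⟩ := hFne _ hp
    obtain ⟨b, hb⟩ := fibF_nonempty hi
    exact ⟨(i, b), mem_fibF.1 hb⟩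
  · rintro ⟨i, b⟩ hib
    have hb : b ∈ fibF S i := mem_fibF.2 hib
    have hi : i ∈ projF S := mem_projF.2 ⟨b, hib⟩
    exact mem_product.2 ⟨hFA _ hp hi, hGB _ (hf i hi) hb⟩

lemma wreath_antichain {F : Set (Finset α)} {G : Set (Finset β)}
    (hF : IsAntichainFamilyS F) (hG : IsAntichainFamilyS G)
    (hGne : ∀ g ∈ G, Finset.Nonempty g) :
    IsAntichainFamilyS (Wreath F G) := by
  intro S hS T hT hST
  obtain ⟨hpS, hfS⟩ := wreath_spec hGne hS
  obtain ⟨hpT, hfT⟩ := wreath_spec hGne hT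
  have hproj : projF S = projF T := by
    refine hF _ hpS _ hpT ?_
    intro i hi
    obtain ⟨b, hb⟩ := mem_projF.1 hi
    exact mem_projF.2 ⟨b, hST hb⟩
  refine eq_of_fibF fun i => ?_
  by_cases hi : i ∈ projF S
  · refine hG _ (hfS i hi) _ (hfT i (hproj ▸ hi)) ?_
    intro b hb
    exact mem_fibF.2 (hST (mem_fibF.1 hb))
  · rw [fibF_eq_empty hi, fibF_eq_empty (hproj ▸ hi)]

lemma natCast_zmod_two_odd {n : ℕ} (h : Odd n) : (n : ZMod 2) = 1 := by
  obtain ⟨k, rfl⟩ := h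
  push_cast
  rw [show (2 : ZMod 2) = 0 from rfl]
  ring

lemma natCast_zmod_two_even {n : ℕ} (h : Even n) : (n : ZMod 2) = 0 := by
  obtain ⟨k, rfl⟩ := h
  push_cast
  rw [show ((k : ZMod 2) + k) = 2 * k from by ring, show (2 : ZMod 2) = 0 from rfl]
  ring

lemma odd_iff_zmod {n : ℕ} : Odd n ↔ (n : ZMod 2) = 1 := by
  constructor
  · exact natCast_zmod_two_odd
  · intro h
    by_contra he
    rw [Nat.not_odd_iff_even] at he
    rw [natCast_zmod_two_even he] at h
    exact absurd h (by decide)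

/-- Key claim inside the odd-sunflower-freeness proof for wreath products:
for each first coordinate appearing in some member of an odd sunflower `H`,
all members containing it have the same fiber, and it appears in an odd number
of members. -/
lemma wreath_key {F : Set (Finset α)} {G : Set (Finset β)}
    (hG : OddSunflowerFreeS G) (hGac : IsAntichainFamilyS G)
    (hGne : ∀ g ∈ G, Finset.Nonempty g)
    {H : Finset (Finset (α × β))} (hH : ↑H ⊆ Wreath F G)
    (hdeg : ∀ x ∈ H.sup id, Odd (H.filter (fun S => x ∈ S)).card)
    {i : α} {S₀ : Finset (α × β)} (hS₀ : S₀ ∈ H) (hiS₀ : i ∈ projF S₀) :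
    (∃ g₀ ∈ G, ∀ S ∈ H, i ∈ projF S → fibF S i = g₀) ∧
      Odd ((H.filter (fun S => i ∈ projF S)).card) := by
  classical
  set A := H.filter (fun S => i ∈ projF S) with hA
  set Im := A.image (fun S => fibF S i) with hIm
  set cnt := fun g : Finset β => (A.filter (fun S => fibF S i = g)).card with hcnt
  set K := Im.filter (fun g => Odd (cnt g)) with hK
  have hAH : ∀ S ∈ A, S ∈ H ∧ i ∈ projF S := fun S hS => mem_filter.1 hS
  have hImG : ∀ g ∈ Im, g ∈ G := by
    intro g hg
    obtain ⟨S, hS, rfl⟩ := mem_image.1 hg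
    exact (wreath_spec hGne (hH (hAH S hS).1)).2 i (hAH S hS).2
  have hKG : ∀ g ∈ K, g ∈ G := fun g hg => hImG g (mem_of_mem_filter g hg)
  have hsup : ∀ S ∈ H, ∀ p : α × β, p ∈ S → p ∈ H.sup id :=
    fun S hS p hp => (Finset.le_sup (f := id) hS) hp
  -- parity identity
  have hpar : ∀ b : β, ((H.filter (fun S => (i, b) ∈ S)).card : ZMod 2) =
      ((K.filter (fun g => b ∈ g)).card : ZMod 2) := by
    intro b
    have h1 : H.filter (fun S => (i, b) ∈ S) = A.filter (fun S => b ∈ fibF S i) := by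
      rw [hA, Finset.filter_filter]
      apply Finset.filter_congr
      intro S _
      constructor
      · intro h; exact ⟨mem_projF.2 ⟨b, h⟩, mem_fibF.2 h⟩
      · intro h; exact mem_fibF.1 h.2
    have h2 : (A.filter (fun S => b ∈ fibF S i)).card =
        ∑ g ∈ Im, ((A.filter (fun S => b ∈ fibF S i)).filter (fun S => fibF S i = g)).card :=
      Finset.card_eq_sum_card_fiberwise
        (fun S hS => mem_image_of_mem _ (mem_of_mem_filter S hS))
    have h3 : ∀ g : Finset β, (A.filter (fun S => b ∈ fibF S i)).filter
        (fun S => fibF S i = g) = if b ∈ g then A.filter (fun S => fibF S i = g) else ∅ := by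
      intro g
      rw [Finset.filter_filter]
      by_cases hb : b ∈ g
      · rw [if_pos hb]
        apply Finset.filter_congr
        intro S _
        exact ⟨fun h => h.2, fun h => ⟨by rw [h]; exact hb, h⟩⟩
      · rw [if_neg hb]
        apply Finset.filter_false_of_mem
        intro S _ h
        exact hb (by rw [← h.2]; exact h.1)
    have h4 : K.filter (fun g => b ∈ g) = Im.filter (fun g => Odd (cnt g) ∧ b ∈ g) := by
      rw [hK, Finset.filter_filter]
    have h5 : (Im.filter (fun g => Odd (cnt g) ∧ b ∈ g)).card =
        ∑ g ∈ Im, if Odd (cnt g) ∧ b ∈ g then 1 else 0 := Finset.card_filter _ _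
    rw [h1, h2, h4, h5]
    push_cast
    apply Finset.sum_congr rfl
    intro g _
    rw [h3 g]
    by_cases hb : b ∈ g <;> by_cases ho : Odd (cnt g)
    · rw [if_pos hb, if_pos ⟨ho, hb⟩, natCast_zmod_two_odd ho]
    · rw [if_pos hb, if_neg (fun h => ho h.1),
        natCast_zmod_two_even (Nat.not_odd_iff_even.1 ho)]
    · rw [if_neg hb, if_neg (fun h => hb h.2)]
      simp
    · rw [if_neg hb, if_neg (fun h => hb h.2)]
      norm_num
  -- every element covered by a fiber has odd degree in K
  have hstep4 : ∀ b : β, (∃ g ∈ Im, b ∈ g) → Odd ((K.filter (fun g => b ∈ g)).card) := by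
    rintro b ⟨g, hg, hb⟩
    obtain ⟨S, hS, rfl⟩ := mem_image.1 hg
    have hibS : (i, b) ∈ S := mem_fibF.1 hb
    have : Odd ((H.filter (fun S => (i, b) ∈ S)).card) :=
      hdeg (i, b) (hsup S (hAH S hS).1 _ hibS)
    rw [odd_iff_zmod] at this ⊢
    rw [← hpar b]
    exact this
  have hS₀A : S₀ ∈ A := mem_filter.2 ⟨hS₀, hiS₀⟩
  -- K is a singleton
  have hKne : K.Nonempty := by
    obtain ⟨b, hb⟩ := fibF_nonempty hiS₀
    have := hstep4 b ⟨fibF S₀ i, mem_image_of_mem _ hS₀A, hb⟩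
    obtain ⟨g, hg⟩ := Finset.card_pos.1 this.pos
    exact ⟨g, mem_of_mem_filter g hg⟩
  have hKcard : K.card = 1 := by
    rcases Nat.lt_or_ge K.card 2 with h | h
    · have := Finset.card_pos.2 hKne
      omega
    · exfalso
      refine hG K (fun g hg => hKG g hg) ⟨h, ?_, ?_⟩
      · intro g hg
        exact hGne g (hKG g hg)
      · intro b hb
        simp only [mem_sup, id] at hb
        obtain ⟨g, hg, hbg⟩ := hb
        exact hstep4 b ⟨g, mem_of_mem_filter g hg, hbg⟩
  obtain ⟨g₀, hg₀⟩ := Finset.card_eq_one.1 hKcard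
  have hg₀K : g₀ ∈ K := by rw [hg₀]; exact mem_singleton_self g₀
  have hg₀G : g₀ ∈ G := hKG g₀ hg₀K
  -- all fibers equal g₀
  have hall : ∀ S ∈ H, i ∈ projF S → fibF S i = g₀ := by
    intro S hS hiS
    have hSA : S ∈ A := mem_filter.2 ⟨hS, hiS⟩
    have hgIm : fibF S i ∈ Im := mem_image_of_mem _ hSA
    refine hGac _ (hImG _ hgIm) _ hg₀G ?_
    intro b hb
    have hodd := hstep4 b ⟨fibF S i, hgIm, hb⟩
    rw [hg₀] at hodd
    by_contra hbg₀
    rw [Finset.filter_singleton, if_neg hbg₀] at hodd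
    simp at hodd
  refine ⟨⟨g₀, hg₀G, hall⟩, ?_⟩
  have : A = A.filter (fun S => fibF S i = g₀) := by
    rw [Finset.filter_true_of_mem]
    intro S hS
    exact hall S (hAH S hS).1 (hAH S hS).2
  have hoddA : Odd (cnt g₀) := (mem_filter.1 hg₀K).2
  rw [hcnt] at hoddA
  simp only at hoddA
  rw [this]
  exact hoddA

lemma wreath_osf {F : Set (Finset α)} {G : Set (Finset β)}
    (hF : OddSunflowerFreeS F)
    (hG : OddSunflowerFreeS G) (hGac : IsAntichainFamilyS G)
    (hGne : ∀ g ∈ G, Finset.Nonempty g) :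
    OddSunflowerFreeS (Wreath F G) := by
  intro H hH hOS
  obtain ⟨hcard, hne, hdeg⟩ := hOS
  -- the projection map is injective on H
  have hinj : Set.InjOn projF (↑H : Set (Finset (α × β))) := by
    intro S hS T hT hproj
    refine eq_of_fibF fun i => ?_
    by_cases hi : i ∈ projF S
    · obtain ⟨⟨g₀, hg₀, hall⟩, -⟩ := wreath_key hG hGac hGne hH hdeg hS hi
      rw [hall S hS hi, hall T hT (hproj ▸ hi)]
    · rw [fibF_eq_empty hi, fibF_eq_empty (hproj ▸ hi)]
  have hMsub : ↑(H.image projF) ⊆ F := by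
    intro T hT
    simp only [coe_image, Set.mem_image, mem_coe] at hT
    obtain ⟨S, hS, rfl⟩ := hT
    exact (wreath_spec hGne (hH hS)).1
  refine hF (H.image projF) hMsub ⟨?_, ?_, ?_⟩
  · rwa [Finset.card_image_of_injOn hinj]
  · intro T hT
    simp only [mem_image] at hT
    obtain ⟨S, hS, rfl⟩ := hT
    obtain ⟨⟨i, b⟩, hib⟩ := hne S hS
    exact ⟨i, mem_projF.2 ⟨b, hib⟩⟩
  · intro i hi
    simp only [mem_sup, mem_image, id] at hi
    obtain ⟨T, ⟨S₀, hS₀, rfl⟩, hiT⟩ := hi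
    have key := (wreath_key hG hGac hGne hH hdeg hS₀ hiT).2
    have himg : (H.image projF).filter (fun T => i ∈ T) =
        (H.filter (fun S => i ∈ projF S)).image projF := by
      rw [Finset.filter_image]
    rw [himg, Finset.card_image_of_injOn (hinj.mono (by simp only [Finset.coe_filter]; exact fun S hS => hS.1))]
    exact key

/-- A finset version of the wreath product, for counting. -/
def wreathFin (F : Finset (Finset α)) (G : Finset (Finset β)) : Finset (Finset (α × β)) :=
  F.biUnion fun F₀ => (F₀.pi fun _ => G).image fun g =>
    F₀.attach.biUnion fun i => ({i.1} : Finset α) ×ˢ g i.1 i.2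

lemma mem_attach_biUnion {F₀ : Finset α} {g : ∀ a ∈ F₀, Finset β} {p : α × β} :
    p ∈ F₀.attach.biUnion (fun i => ({i.1} : Finset α) ×ˢ g i.1 i.2) ↔
      ∃ h : p.1 ∈ F₀, p.2 ∈ g p.1 h := by
  obtain ⟨x, b⟩ := p
  constructor
  · intro hp
    obtain ⟨⟨j, hj⟩, -, hp⟩ := mem_biUnion.1 hp
    obtain ⟨h1, h2⟩ := mem_product.1 hp
    simp only [mem_singleton] at h1
    subst h1
    exact ⟨hj, h2⟩
  · rintro ⟨h, hb⟩
    exact mem_biUnion.2 ⟨⟨x, h⟩, mem_attach _ _,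
      mem_product.2 ⟨mem_singleton_self _, hb⟩⟩

set_option maxHeartbeats 1000000 in
lemma wreathFin_coe {F : Finset (Finset α)} {G : Finset (Finset β)}
    (hGne : ∀ g ∈ G, Finset.Nonempty g) :
    (↑(wreathFin F G) : Set (Finset (α × β))) = Wreath (↑F) (↑G) := by
  ext S
  simp only [Finset.mem_coe, wreathFin, mem_biUnion, mem_image]
  constructor
  · rintro ⟨F₀, hF₀, g, hg, rfl⟩
    refine ⟨F₀, hF₀, fun i => if h : i ∈ F₀ then g i h else ∅, ?_, ?_⟩
    · intro i hi
      simp only [dif_pos hi]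
      exact Finset.mem_pi.1 hg i hi
    · have key := fun (p : α × β) => mem_attach_biUnion (F₀ := F₀) (g := g) (p := p)
      ext ⟨x, b⟩
      constructor
      · intro hp
        obtain ⟨h, hb⟩ := (key (x, b)).1 hp
        refine mem_biUnion.2 ⟨x, h, mem_product.2 ⟨mem_singleton_self _, ?_⟩⟩
        simp only [dif_pos h]
        exact hb
      · intro hp
        obtain ⟨j, hj, hp2⟩ := mem_biUnion.1 hp
        obtain ⟨h1, h2⟩ := mem_product.1 hp2
        simp only [mem_singleton] at h1
        subst h1
        simp only [dif_pos hj] at h2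
        exact (key (x, b)).2 ⟨hj, h2⟩
  · rintro ⟨F₀, hF₀, g, hg, rfl⟩
    refine ⟨F₀, hF₀, fun i _ => g i, Finset.mem_pi.2 (fun i hi => hg i hi), ?_⟩
    have key := fun (p : α × β) => mem_attach_biUnion (F₀ := F₀) (g := fun a _ => g a) (p := p)
    ext ⟨x, b⟩
    constructor
    · intro hp
      obtain ⟨h, hb⟩ := (key (x, b)).1 hp
      exact mem_biUnion.2 ⟨x, h, mem_product.2 ⟨mem_singleton_self _, hb⟩⟩
    · intro hp
      obtain ⟨j, hj, hp2⟩ := mem_biUnion.1 hp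
      obtain ⟨h1, h2⟩ := mem_product.1 hp2
      simp only [mem_singleton] at h1
      subst h1
      exact (key (x, b)).2 ⟨hj, h2⟩

lemma wreathFin_proj {F₀ : Finset α} {G : Finset (Finset β)}
    (hGne : ∀ g ∈ G, Finset.Nonempty g) {g : ∀ a ∈ F₀, Finset β}
    (hg : g ∈ F₀.pi fun _ => G) :
    projF (F₀.attach.biUnion fun i => ({i.1} : Finset α) ×ˢ g i.1 i.2) = F₀ := by
  ext i
  rw [mem_projF]
  constructor
  · rintro ⟨b, hb⟩
    exact (mem_attach_biUnion.1 hb).1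
  · intro hi
    obtain ⟨b, hb⟩ := hGne _ (Finset.mem_pi.1 hg i hi)
    exact ⟨b, mem_attach_biUnion.2 ⟨hi, hb⟩⟩

lemma wreathFin_card {F : Finset (Finset α)} {G : Finset (Finset β)}
    (hGne : ∀ g ∈ G, Finset.Nonempty g) {m : ℕ} (hm : ∀ f ∈ F, f.card = m) :
    (wreathFin F G).card = F.card * G.card ^ m := by
  rw [wreathFin, Finset.card_biUnion]
  · have hterm : ∀ F₀ ∈ F, (((F₀.pi fun _ => G).image fun g =>
        F₀.attach.biUnion fun i => ({i.1} : Finset α) ×ˢ g i.1 i.2)).card =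
        G.card ^ m := by
      intro F₀ hF₀
      rw [Finset.card_image_of_injOn, Finset.card_pi, Finset.prod_const, hm F₀ hF₀]
      intro g hg g' hg' h
      simp only [Finset.mem_coe] at hg hg'
      funext i hi
      ext b
      have h1 : b ∈ g i hi ↔ ((i, b) : α × β) ∈
          F₀.attach.biUnion fun j => ({j.1} : Finset α) ×ˢ g j.1 j.2 := by
        rw [mem_attach_biUnion]
        exact ⟨fun hb => ⟨hi, hb⟩, fun ⟨_, hb⟩ => hb⟩
      have h2 : b ∈ g' i hi ↔ ((i, b) : α × β) ∈
          F₀.attach.biUnion fun j => ({j.1} : Finset α) ×ˢ g' j.1 j.2 := by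
        rw [mem_attach_biUnion]
        exact ⟨fun hb => ⟨hi, hb⟩, fun ⟨_, hb⟩ => hb⟩
      rw [h1, h2]
      rw [show (F₀.attach.biUnion fun j => ({j.1} : Finset α) ×ˢ g j.1 j.2) =
          (F₀.attach.biUnion fun j => ({j.1} : Finset α) ×ˢ g' j.1 j.2) from h]
    rw [Finset.sum_congr rfl hterm, Finset.sum_const, smul_eq_mul]
  · intro F₀ hF₀ F₁ hF₁ hne
    simp only [Finset.disjoint_left]
    intro S hS hS'
    obtain ⟨g, hg, rfl⟩ := mem_image.1 hS
    obtain ⟨g', hg', hEq⟩ := mem_image.1 hS'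
    apply hne
    rw [← wreathFin_proj hGne hg, ← wreathFin_proj hGne hg']
    exact congrArg projF hEq.symm

lemma cfam_mem {n : ℕ} {T : Finset ℕ} :
    T ∈ Cfam n ↔ T ⊆ Finset.Icc 1 n ∧ T.card = n - 1 := Finset.mem_powersetCard

lemma cfam_nonempty {n : ℕ} (hn : 2 ≤ n) : ∀ T ∈ (↑(Cfam n) : Set (Finset ℕ)), T.Nonempty := by
  intro T hT
  rw [Finset.mem_coe, cfam_mem] at hT
  rw [← Finset.card_pos, hT.2]
  omega

lemma cfam_subset {n : ℕ} : ∀ T ∈ (↑(Cfam n) : Set (Finset ℕ)), T ⊆ Finset.Icc 1 n := by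
  intro T hT
  exact (cfam_mem.1 hT).1

lemma cfam_antichain (n : ℕ) : IsAntichainFamilyS (↑(Cfam n) : Set (Finset ℕ)) := by
  intro S hS T hT hST
  rw [Finset.mem_coe, cfam_mem] at hS hT
  exact Finset.eq_of_subset_of_card_le hST (le_of_eq (hT.2.trans hS.2.symm))

lemma cfam_card {n : ℕ} (hn : 1 ≤ n) : (Cfam n).card = n := by
  rw [Cfam, Finset.card_powersetCard, Nat.card_Icc]
  have h1 : n + 1 - 1 = n := by omega
  rw [h1, Nat.choose_symm hn, Nat.choose_one_right]

lemma cfam_osf {n : ℕ} (h2 : 2 ≤ n) (hodd : Odd n) :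
    OddSunflowerFreeS (↑(Cfam n) : Set (Finset ℕ)) := by
  intro H hH hOS
  obtain ⟨hcard, hne, hdeg⟩ := hOS
  set A := Finset.Icc 1 n with hAdef
  have hcardA : A.card = n := by rw [hAdef, Nat.card_Icc]; omega
  have hmem : ∀ T ∈ H, T ⊆ A ∧ T.card = n - 1 := fun T hT => cfam_mem.1 (hH hT)
  have hrep : ∀ T ∈ H, ∃ i ∈ A, T = A.erase i := by
    intro T hT
    obtain ⟨hTA, hTc⟩ := hmem T hT
    have hsd : (A \ T).card = 1 := by
      rw [card_sdiff_of_subset hTA, hcardA, hTc]; omega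
    obtain ⟨i, hi⟩ := Finset.card_eq_one.1 hsd
    have hiA : i ∈ A := by
      have : i ∈ A \ T := by rw [hi]; exact mem_singleton_self i
      exact (mem_sdiff.1 this).1
    refine ⟨i, hiA, ?_⟩
    have hTT : A \ (A \ T) = T := Finset.sdiff_sdiff_eq_self hTA
    rw [← hTT, hi, Finset.erase_eq]
  set I := A.filter (fun i => A.erase i ∈ H) with hI
  have hHI : H = I.image (fun i => A.erase i) := by
    ext T
    simp only [hI, mem_image, mem_filter]
    constructor
    · intro hT
      obtain ⟨i, hiA, rfl⟩ := hrep T hT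
      exact ⟨i, ⟨hiA, hT⟩, rfl⟩
    · rintro ⟨i, ⟨hiA, h⟩, rfl⟩
      exact h
  have hinj : Set.InjOn (fun i => A.erase i) ↑I := by
    intro x hx y hy h
    by_contra hxy
    have hxA : x ∈ A := (mem_filter.1 hx).1
    have hmm : x ∈ A.erase y := mem_erase.2 ⟨hxy, hxA⟩
    simp only at h
    rw [← h] at hmm
    exact (Finset.notMem_erase x A) hmm
  have hk : I.card = H.card := by rw [hHI, Finset.card_image_of_injOn hinj]
  have hIA : I ⊆ A := filter_subset _ _
  have hdegI : ∀ j ∈ A, (H.filter (fun T => j ∈ T)).card =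
      (I.filter (fun i => i ≠ j)).card := by
    intro j hj
    rw [hHI, Finset.filter_image]
    rw [Finset.card_image_of_injOn (hinj.mono (by
      simp only [Finset.coe_filter]; exact fun x hx => hx.1))]
    congr 1
    apply Finset.filter_congr
    intro i hi
    rw [Finset.mem_erase]
    constructor
    · intro h; exact fun he => h.1 (he ▸ rfl)
    · intro h; exact ⟨fun he => h he.symm, hj⟩
  have two : 2 ≤ I.card := hk ▸ hcard
  obtain ⟨x, hx, y, hy, hxy⟩ := Finset.one_lt_card.1 two
  have hxA : x ∈ A := hIA hx
  have hxe : x ∈ A.erase y := mem_erase.2 ⟨hxy, hxA⟩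
  have heyH : A.erase y ∈ H := (mem_filter.1 hy).2
  have hxsup : x ∈ H.sup id := (Finset.le_sup (f := id) heyH) hxe
  have hdx := hdeg x hxsup
  rw [hdegI x hxA, Finset.filter_ne', Finset.card_erase_of_mem hx] at hdx
  rcases Nat.lt_or_ge I.card n with hlt | hge
  · have hex : ∃ j ∈ A, j ∉ I := by
      by_contra h
      push_neg at h
      have : A ⊆ I := fun j hj => h j hj
      have := Finset.card_le_card this
      omega
    obtain ⟨j, hjA, hjI⟩ := hex
    have hjx : j ≠ x := fun h => hjI (h ▸ hx)
    have hje : j ∈ A.erase x := mem_erase.2 ⟨hjx, hjA⟩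
    have hexH : A.erase x ∈ H := (mem_filter.1 hx).2
    have hjsup : j ∈ H.sup id := (Finset.le_sup (f := id) hexH) hje
    have hdj := hdeg j hjsup
    rw [hdegI j hjA] at hdj
    have hfull : I.filter (fun i => i ≠ j) = I :=
      Finset.filter_true_of_mem (fun i hi h => hjI (h ▸ hi))
    rw [hfull] at hdj
    rcases hdx with ⟨a, ha⟩
    rcases hdj with ⟨b, hb⟩
    omega
  · have hIAeq : I = A := Finset.eq_of_subset_of_card_le hIA (by omega)
    have hIn : I.card = n := by rw [hIAeq, hcardA]
    rcases hodd with ⟨m, hm⟩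
    rcases hdx with ⟨a, ha⟩
    omega

end Aux

set_option maxRecDepth 40000 in
/-- Construction 3: the wreath product `C_160511 ≀ (C_9 ≀ C_3)` is an odd-sunflower-free
antichain of `160511 · 3^1605100` nonempty subsets of a `4333797`-element set. -/
theorem wreath_C160511_C9_C3 :
    (∀ S ∈ Wreath ((Cfam 160511 : Finset (Finset ℕ)) : Set (Finset ℕ))
        (Wreath ((Cfam 9 : Finset (Finset ℕ)) : Set (Finset ℕ))
          ((Cfam 3 : Finset (Finset ℕ)) : Set (Finset ℕ))),
      S.Nonempty ∧ S ⊆ Finset.Icc 1 160511 ×ˢ (Finset.Icc 1 9 ×ˢ Finset.Icc 1 3)) ∧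
    (Finset.Icc 1 160511 ×ˢ (Finset.Icc 1 9 ×ˢ Finset.Icc 1 3) :
        Finset (ℕ × ℕ × ℕ)).card = 4333797 ∧
    IsAntichainFamilyS (Wreath ((Cfam 160511 : Finset (Finset ℕ)) : Set (Finset ℕ))
        (Wreath ((Cfam 9 : Finset (Finset ℕ)) : Set (Finset ℕ))
          ((Cfam 3 : Finset (Finset ℕ)) : Set (Finset ℕ)))) ∧
    OddSunflowerFreeS (Wreath ((Cfam 160511 : Finset (Finset ℕ)) : Set (Finset ℕ))
        (Wreath ((Cfam 9 : Finset (Finset ℕ)) : Set (Finset ℕ))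
          ((Cfam 3 : Finset (Finset ℕ)) : Set (Finset ℕ)))) ∧
    (Wreath ((Cfam 160511 : Finset (Finset ℕ)) : Set (Finset ℕ))
        (Wreath ((Cfam 9 : Finset (Finset ℕ)) : Set (Finset ℕ))
          ((Cfam 3 : Finset (Finset ℕ)) : Set (Finset ℕ)))).ncard =
      160511 * 3 ^ 1605100 := by
  have h9 : (2 : ℕ) ≤ 9 := by norm_num
  have h3 : (2 : ℕ) ≤ 3 := by norm_num
  have hN : (2 : ℕ) ≤ 160511 := by norm_num
  have ho9 : Odd 9 := ⟨4, rfl⟩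
  have ho3 : Odd 3 := ⟨1, rfl⟩
  have hoN : Odd 160511 := ⟨80255, by norm_num⟩
  -- inner wreath product
  set W : Set (Finset (ℕ × ℕ)) :=
    Wreath ((Cfam 9 : Finset (Finset ℕ)) : Set (Finset ℕ))
      ((Cfam 3 : Finset (Finset ℕ)) : Set (Finset ℕ)) with hW
  have hWprop : ∀ S ∈ W, S.Nonempty ∧ S ⊆ Finset.Icc 1 9 ×ˢ Finset.Icc 1 3 :=
    fun S hS => wreath_nonempty_subset (cfam_nonempty h9) (cfam_nonempty h3)
      cfam_subset cfam_subset hS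
  have hWne : ∀ S ∈ W, Finset.Nonempty S := fun S hS => (hWprop S hS).1
  have hWsub : ∀ S ∈ W, S ⊆ Finset.Icc 1 9 ×ˢ Finset.Icc 1 3 := fun S hS => (hWprop S hS).2
  have hWac : IsAntichainFamilyS W :=
    wreath_antichain (cfam_antichain 9) (cfam_antichain 3) (cfam_nonempty h3)
  have hWosf : OddSunflowerFreeS W :=
    wreath_osf (cfam_osf h9 ho9) (cfam_osf h3 ho3) (cfam_antichain 3) (cfam_nonempty h3)
  refine ⟨?_, ?_, ?_, ?_, ?_⟩
  · intro S hS
    exact wreath_nonempty_subset (cfam_nonempty hN) hWne cfam_subset hWsub hS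
  · rw [Finset.card_product, Finset.card_product, Nat.card_Icc, Nat.card_Icc, Nat.card_Icc]
  · exact wreath_antichain (cfam_antichain 160511) hWac hWne
  · exact wreath_osf (cfam_osf hN hoN) hWosf hWac hWne
  · -- cardinality
    have e1 : (↑(wreathFin (Cfam 9) (Cfam 3)) : Set (Finset (ℕ × ℕ))) = W :=
      wreathFin_coe (fun g hg => cfam_nonempty h3 g hg)
    have hW1ne : ∀ g ∈ wreathFin (Cfam 9) (Cfam 3), Finset.Nonempty g := by
      intro g hg
      have hmem : g ∈ (↑(wreathFin (Cfam 9) (Cfam 3)) : Set (Finset (ℕ × ℕ))) :=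
        Finset.mem_coe.2 hg
      rw [e1] at hmem
      exact hWne g hmem
    have e2 : (↑(wreathFin (Cfam 160511) (wreathFin (Cfam 9) (Cfam 3))) :
        Set (Finset (ℕ × ℕ × ℕ))) = Wreath ((Cfam 160511 : Finset (Finset ℕ)) :
        Set (Finset ℕ)) W := by
      rw [← e1]
      exact wreathFin_coe hW1ne
    rw [← e2, Set.ncard_coe_finset]
    have hmN : ∀ f ∈ Cfam 160511, f.card = 160510 := fun f hf => (cfam_mem.1 hf).2
    have hm9 : ∀ f ∈ Cfam 9, f.card = 8 := fun f hf => (cfam_mem.1 hf).2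
    rw [wreathFin_card hW1ne hmN, cfam_card (by norm_num : 1 ≤ 160511)]
    rw [wreathFin_card (fun g hg => cfam_nonempty h3 g hg) hm9,
      cfam_card (by norm_num : 1 ≤ 9), cfam_card (by norm_num : 1 ≤ 3)]
    have h1 : (9 * 3 ^ 8 : ℕ) = 3 ^ 10 := by norm_num
    have h2 : (10 * 160510 : ℕ) = 1605100 := by norm_num
    rw [h1, ← pow_mul, h2]
end
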